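/- arXiv:1211.5257 — 8 statements merged into one kernel-verified Lean document; each statement's English description precedes it below -/
import Mathlib

section
/- Let m ≥ 4 be even and let i1, i2 ∈ {0,1,2,3} with i1 - i2 ≡ 1 (mod 2). Then for every a ∈ F_2^m and every ε ∈ F_2, the number of x ∈ F_2^m such that f_{i1,i2}(x) + a·x + ε = 1 equals 2^{m-1} + 2^{m/2-1} or 2^{m-1} - 2^{m/2-1}. -/
open Finset

/-- Hamming weight of a vector of `F₂^m`. -/
def wt {m : ℕ} (x : Fin m → ZMod 2) : ℕ :=
  (Finset.univ.filter (fun i => x i = 1)).card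

/-- The Boolean function `f_{i₁,i₂}` : value `1` iff `wt x ≡ i₁ or i₂ (mod 4)`. -/
def bf (i₁ i₂ : ℕ) {m : ℕ} (x : Fin m → ZMod 2) : ZMod 2 :=
  if wt x % 4 = i₁ ∨ wt x % 4 = i₂ then 1 else 0

/-- Inner product over `F₂`. -/
def dot {m : ℕ} (a x : Fin m → ZMod 2) : ZMod 2 := ∑ i, a i * x i

namespace Stmt6Aux

abbrev K : Type := ℤ√(-1)

def J : K := Zsqrtd.sqrtd

def sg (c : ZMod 2) : K := if c = 1 then -1 else 1
def sz (c : ZMod 2) : ℤ := if c = 1 then -1 else 1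
def sI (i₁ i₂ : ℕ) (n : ℕ) : ℤ := if n % 4 = i₁ ∨ n % 4 = i₂ then -1 else 1

lemma sg_add : ∀ u v : ZMod 2, sg (u + v) = sg u * sg v := by decide
lemma sz_add : ∀ u v : ZMod 2, sz (u + v) = sz u * sz v := by decide

lemma re_sum {ι : Type*} (s : Finset ι) (f : ι → K) :
    (∑ i ∈ s, f i).re = ∑ i ∈ s, (f i).re := by
  classical
  induction s using Finset.cons_induction with
  | empty => simp
  | cons a s ha ih => rw [Finset.sum_cons, Finset.sum_cons, Zsqrtd.re_add, ih]

lemma sg_sum {ι : Type*} (s : Finset ι) (f : ι → ZMod 2) :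
    sg (∑ i ∈ s, f i) = ∏ i ∈ s, sg (f i) := by
  classical
  induction s using Finset.cons_induction with
  | empty => simp [sg]
  | cons a s ha ih => rw [Finset.sum_cons, Finset.prod_cons, sg_add, ih]

lemma J_pow_mod (n : ℕ) : J ^ n = J ^ (n % 4) := by
  conv_lhs => rw [← Nat.div_add_mod n 4]
  rw [pow_add, pow_mul]
  have h4 : J ^ 4 = 1 := by decide
  rw [h4, one_pow, one_mul]

lemma re_mul_sg (u : K) (c : ZMod 2) : (u * sg c).re = u.re * sz c := by
  by_cases h : c = 1 <;> simp [sg, sz, h]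

lemma wt_eq {m : ℕ} (x : Fin m → ZMod 2) : wt x = ∑ j, (x j).val := by
  unfold wt
  rw [Finset.card_filter]
  refine Finset.sum_congr rfl fun j _ => ?_
  have h : ∀ c : ZMod 2, (if c = 1 then 1 else 0) = c.val := by decide
  exact h (x j)

lemma sum_zmod2 : ∀ c : ZMod 2, (∑ v : ZMod 2, J ^ v.val * sg (c * v)) = 1 + J * sg c := by
  decide

end Stmt6Aux

open Stmt6Aux in
theorem stmt_6 (m : ℕ) (hm : 4 ≤ m) (hme : Even m) (i₁ i₂ : ℕ) (h₁ : i₁ < 4) (h₂ : i₂ < 4)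
    (hodd : ((i₁ : ℤ) - i₂) % 2 = 1) (a : Fin m → ZMod 2) (ε : ZMod 2) :
    (Finset.univ.filter (fun x : Fin m → ZMod 2 => bf i₁ i₂ x + dot a x + ε = 1)).card
        = 2 ^ (m - 1) + 2 ^ (m / 2 - 1) ∨
      (Finset.univ.filter (fun x : Fin m → ZMod 2 => bf i₁ i₂ x + dot a x + ε = 1)).card
        = 2 ^ (m - 1) - 2 ^ (m / 2 - 1) := by
  classical
  obtain ⟨t, ht⟩ := hme
  set N := (Finset.univ.filter (fun x : Fin m → ZMod 2 => bf i₁ i₂ x + dot a x + ε = 1)).card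
    with hN
  have hcard : (Finset.univ : Finset (Fin m → ZMod 2)).card = 2 ^ m := by
    simp [Finset.card_univ, Fintype.card_fun]
  have hNle : N ≤ 2 ^ m := by
    rw [hN, ← hcard]; exact Finset.card_filter_le _ _
  -- T = 2^m - 2N
  have hT : ∑ x : Fin m → ZMod 2, sz (bf i₁ i₂ x + dot a x + ε)
      = (2 ^ m : ℤ) - 2 * N := by
    have : ∀ x : Fin m → ZMod 2, sz (bf i₁ i₂ x + dot a x + ε)
        = if bf i₁ i₂ x + dot a x + ε = 1 then (-1 : ℤ) else 1 := fun x => rfl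
    rw [Finset.sum_congr rfl fun x _ => this x, Finset.sum_ite, Finset.sum_const,
      Finset.sum_const]
    have hsplit := Finset.card_filter_add_card_filter_not
      (s := (Finset.univ : Finset (Fin m → ZMod 2)))
      (p := fun x => bf i₁ i₂ x + dot a x + ε = 1)
    rw [hcard] at hsplit
    have hneg : (Finset.univ.filter
        (fun x : Fin m → ZMod 2 => ¬ (bf i₁ i₂ x + dot a x + ε = 1))).card = 2 ^ m - N := by
      omega
    rw [hneg, ← hN]
    simp only [nsmul_eq_mul, mul_one, mul_neg_one]
    rw [Nat.cast_sub hNle]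
    push_cast
    ring
  -- pointwise sign decomposition
  have hB : ∀ x : Fin m → ZMod 2, sz (bf i₁ i₂ x + dot a x + ε)
      = sz ε * (sI i₁ i₂ (wt x) * sz (dot a x)) := by
    intro x
    rw [sz_add, sz_add]
    have hbf : sz (bf i₁ i₂ x) = sI i₁ i₂ (wt x) := by
      unfold bf sI
      split_ifs with h
      · simp [sz]
      · simp [sz]
    rw [hbf]; ring
  -- α, β pattern
  obtain ⟨α, β, hα, hβ, hs⟩ :
      ∃ α β : ℤ, (α = 1 ∨ α = -1) ∧ (β = 1 ∨ β = -1) ∧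
        ∀ n : ℕ, sI i₁ i₂ n = α * (J ^ n).re + β * (J ^ n).im := by
    refine ⟨sI i₁ i₂ 0, sI i₁ i₂ 1, ?_, ?_, ?_⟩
    · unfold sI; split_ifs <;> simp
    · unfold sI; split_ifs <;> simp
    · intro n
      have e : n % 4 % 4 = n % 4 := by omega
      have hmod : sI i₁ i₂ n = sI i₁ i₂ (n % 4) := by unfold sI; rw [e]
      rw [hmod, J_pow_mod]
      have h4 : n % 4 = 0 ∨ n % 4 = 1 ∨ n % 4 = 2 ∨ n % 4 = 3 := by omega
      rcases h4 with h | h | h | h <;> rw [h]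
      · have h1 : ((J ^ 0 : K)).re = 1 := by decide
        have h2 : ((J ^ 0 : K)).im = 0 := by decide
        rw [h1, h2]; ring
      · have h1 : ((J ^ 1 : K)).re = 0 := by decide
        have h2 : ((J ^ 1 : K)).im = 1 := by decide
        rw [h1, h2]; ring
      · have h1 : ((J ^ 2 : K)).re = -1 := by decide
        have h2 : ((J ^ 2 : K)).im = 0 := by decide
        rw [h1, h2]
        unfold sI
        split_ifs <;> omega
      · have h1 : ((J ^ 3 : K)).re = 0 := by decide
        have h2 : ((J ^ 3 : K)).im = -1 := by decide
        rw [h1, h2]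
        unfold sI
        split_ifs <;> omega
  set A : K := ⟨α, -β⟩ with hA
  have hAre : ∀ n : ℕ, (A * J ^ n).re = sI i₁ i₂ n := by
    intro n
    rw [Zsqrtd.re_mul]
    have e1 : A.re = α := rfl
    have e2 : A.im = -β := rfl
    rw [e1, e2, hs n]; ring
  -- the Gaussian sum S and its factorization
  set w := (Finset.univ.filter (fun j : Fin m => a j = 1)).card with hw
  have hwle : w ≤ m := by
    rw [hw]
    calc (Finset.univ.filter (fun j : Fin m => a j = 1)).card
        ≤ (Finset.univ : Finset (Fin m)).card := Finset.card_filter_le _ _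
      _ = m := by simp
  have hfac : ∀ x : Fin m → ZMod 2,
      J ^ (wt x) * sg (dot a x) = ∏ j, (J ^ (x j).val * sg (a j * x j)) := by
    intro x
    rw [wt_eq, ← Finset.prod_pow_eq_pow_sum,
      show dot a x = ∑ i, a i * x i from rfl, sg_sum, ← Finset.prod_mul_distrib]
  have hswap : (∏ j : Fin m, ∑ v : ZMod 2, J ^ v.val * sg (a j * v))
      = ∑ x : Fin m → ZMod 2, ∏ j, (J ^ (x j).val * sg (a j * x j)) := by
    rw [Finset.prod_univ_sum, Fintype.piFinset_univ]
  have hS : ∑ x : Fin m → ZMod 2, J ^ (wt x) * sg (dot a x)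
      = (1 - J) ^ w * (1 + J) ^ (m - w) := by
    rw [Finset.sum_congr rfl fun x _ => hfac x, ← hswap,
      Finset.prod_congr rfl fun j _ => sum_zmod2 (a j)]
    rw [← Finset.prod_filter_mul_prod_filter_not Finset.univ (fun j => a j = 1)]
    have h1 : ∀ j ∈ Finset.univ.filter (fun j : Fin m => a j = 1),
        1 + J * sg (a j) = 1 - J := by
      intro j hj
      simp only [Finset.mem_filter] at hj
      rw [hj.2]
      show 1 + J * sg 1 = 1 - J
      have : sg 1 = -1 := by decide
      rw [this]; ring
    have h0 : ∀ j ∈ Finset.univ.filter (fun j : Fin m => ¬ a j = 1),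
        1 + J * sg (a j) = 1 + J := by
      intro j hj
      simp only [Finset.mem_filter] at hj
      unfold sg
      rw [if_neg hj.2, mul_one]
    rw [Finset.prod_congr rfl h1, Finset.prod_congr rfl h0, Finset.prod_const,
      Finset.prod_const]
    have hsplit := Finset.card_filter_add_card_filter_not
      (s := (Finset.univ : Finset (Fin m))) (p := fun j => a j = 1)
    have hcardm : (Finset.univ : Finset (Fin m)).card = m := by simp
    rw [hcardm] at hsplit
    have : (Finset.univ.filter (fun j : Fin m => ¬ a j = 1)).card = m - w := by omega
    rw [this, ← hw]
  -- simplify the product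
  have hS2 : (1 - J) ^ w * (1 + J) ^ (m - w) = ((2 ^ t : ℤ) : K) * J ^ (3 * w + t) := by
    have hJ3 : (1 - J) = J ^ 3 * (1 + J) := by decide
    have h2J : ((1 + J) ^ 2 : K) = 2 * J := by decide
    have hmt : m = 2 * t := by omega
    calc (1 - J) ^ w * (1 + J) ^ (m - w)
        = (J ^ 3) ^ w * ((1 + J) ^ w * (1 + J) ^ (m - w)) := by rw [hJ3, mul_pow]; ring
      _ = J ^ (3 * w) * (1 + J) ^ m := by
          rw [← pow_add]
          have hwm : w + (m - w) = m := by omega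
          rw [hwm, ← pow_mul]
      _ = J ^ (3 * w) * ((1 + J) ^ 2) ^ t := by
          rw [hmt, show ((1 + J) ^ (2 * t) : K) = ((1 + J) ^ 2) ^ t from pow_mul _ 2 t]
      _ = J ^ (3 * w) * ((2 : K) ^ t * J ^ t) := by rw [h2J, mul_pow]
      _ = ((2 ^ t : ℤ) : K) * J ^ (3 * w + t) := by push_cast; rw [pow_add]; ring
  -- relate the integer Walsh sum to S
  have hCre : ∑ x : Fin m → ZMod 2, sI i₁ i₂ (wt x) * sz (dot a x)
      = (A * ∑ x : Fin m → ZMod 2, J ^ wt x * sg (dot a x)).re := by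
    rw [Finset.mul_sum, re_sum]
    refine Finset.sum_congr rfl fun x _ => ?_
    rw [← mul_assoc, re_mul_sg, hAre]
  have hre2 : (A * (((2 ^ t : ℤ) : K) * J ^ (3 * w + t))).re
      = 2 ^ t * sI i₁ i₂ (3 * w + t) := by
    have : A * (((2 ^ t : ℤ) : K) * J ^ (3 * w + t))
        = ((2 ^ t : ℤ) : K) * (A * J ^ (3 * w + t)) := by ring
    rw [this, Zsqrtd.re_mul, Zsqrtd.re_intCast, Zsqrtd.im_intCast, hAre]
    ring
  -- T = sz ε * 2^t * sI (3w+t)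
  have hTS : (2 ^ m : ℤ) - 2 * N = sz ε * (2 ^ t * sI i₁ i₂ (3 * w + t)) := by
    rw [← hT, Finset.sum_congr rfl fun x _ => hB x, ← Finset.mul_sum, hCre, hS, hS2, hre2]
  -- numeric conclusion
  have hδ : sI i₁ i₂ (3 * w + t) = 1 ∨ sI i₁ i₂ (3 * w + t) = -1 := by
    unfold sI; split_ifs <;> simp
  have hε : sz ε = 1 ∨ sz ε = -1 := by unfold sz; split_ifs <;> simp
  have hkey : (2 ^ m : ℤ) - 2 * N = 2 ^ t ∨ (2 ^ m : ℤ) - 2 * N = -(2 ^ t) := by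
    rcases hδ with h | h <;> rcases hε with h' | h' <;> rw [hTS, h, h'] <;>
      [left; right; right; left] <;> ring
  have htge : 2 ≤ t := by omega
  have hm2t : m / 2 = t := by omega
  rw [hm2t]
  have hps : (2 : ℤ) ^ m = 2 * 2 ^ (m - 1) := by
    rw [← pow_succ']
    congr 1
    omega
  have hpt : (2 : ℤ) ^ t = 2 * 2 ^ (t - 1) := by
    rw [← pow_succ']
    congr 1
    omega
  have hle : (2 : ℤ) ^ (t - 1) ≤ 2 ^ (m - 1) := by
    apply pow_le_pow_right₀ (by norm_num)
    omega
  have hleN : (2 : ℕ) ^ (t - 1) ≤ 2 ^ (m - 1) := by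
    apply Nat.pow_le_pow_right (by norm_num)
    omega
  have hZ : (N : ℤ) = 2 ^ (m - 1) + 2 ^ (t - 1) ∨ (N : ℤ) = 2 ^ (m - 1) - 2 ^ (t - 1) := by
    rcases hkey with h | h
    · right; rw [hps, hpt] at h; linarith
    · left; rw [hps, hpt] at h; linarith
  rcases hZ with h | h
  · left
    have : ((2 ^ (m - 1) + 2 ^ (t - 1) : ℕ) : ℤ) = 2 ^ (m - 1) + 2 ^ (t - 1) := by push_cast; ring
    exact_mod_cast h.trans this.symm
  · right
    have : ((2 ^ (m - 1) - 2 ^ (t - 1) : ℕ) : ℤ) = 2 ^ (m - 1) - 2 ^ (t - 1) := by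
      push_cast [Nat.cast_sub hleN]
      ring
    exact_mod_cast h.trans this.symm
end

section
/- Let m ≥ 4 be even and let i1, i2 ∈ {0,1,2,3} with i1 ≠ i2. Then f_{i1,i2} is a bent function if and only if i1 - i2 ≡ 1 (mod 2); that is, the equality (∑_{x ∈ F_2^m} (-1)^{f_{i1,i2}(x) + a·x})^2 = 2^m holds for all a ∈ F_2^m if and only if i1 - i2 is odd. -/
open Finset Complex

noncomputable section BentAux

def chi {R : Type*} [CommRing R] (v : ZMod 2) : R := (-1) ^ v.val

lemma chi_zero {R : Type*} [CommRing R] : (chi 0 : R) = 1 := by simp [chi]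

lemma chi_one {R : Type*} [CommRing R] : (chi 1 : R) = -1 := by
  simp [chi, ZMod.val_one]

lemma chi_add {R : Type*} [CommRing R] (u v : ZMod 2) :
    (chi (u + v) : R) = chi u * chi v := by
  unfold chi
  rw [← pow_add, neg_one_pow_eq_pow_mod_two, neg_one_pow_eq_pow_mod_two (n := u.val + v.val)]
  congr 1
  revert u v; decide

lemma chi_mul_self {R : Type*} [CommRing R] (v : ZMod 2) : (chi v : R) * chi v = 1 := by
  unfold chi
  rw [← pow_add]
  exact Even.neg_one_pow ⟨v.val, rfl⟩

lemma conj_chi (v : ZMod 2) : (starRingEnd ℂ) (chi v) = chi v := by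
  unfold chi
  rw [map_pow, map_neg, map_one]

lemma chi_sum {R : Type*} [CommRing R] {ι : Type*} (s : Finset ι) (f : ι → ZMod 2) :
    (chi (∑ j ∈ s, f j) : R) = ∏ j ∈ s, chi (f j) := by
  induction s using Finset.cons_induction with
  | empty => simp [chi]
  | cons a s ha ih => rw [Finset.sum_cons, Finset.prod_cons, chi_add, ih]

lemma wt_eq_sum {m : ℕ} (x : Fin m → ZMod 2) : wt x = ∑ j, (x j).val := by
  unfold wt
  rw [Finset.card_filter]
  refine Finset.sum_congr rfl fun j _ => ?_
  have h : ∀ v : ZMod 2, (if v = 1 then 1 else 0) = v.val := by decide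
  exact h (x j)

lemma sum_pi_prod {R : Type*} [CommSemiring R] {m : ℕ} (g : Fin m → ZMod 2 → R) :
    ∑ x : Fin m → ZMod 2, ∏ j, g j (x j) = ∏ j, ∑ b : ZMod 2, g j b := by
  rw [Finset.prod_univ_sum, Fintype.piFinset_univ]

lemma sum_zmod2 {R : Type*} [AddCommMonoid R] (h : ZMod 2 → R) :
    ∑ b : ZMod 2, h b = h 0 + h 1 := by
  have hu : (Finset.univ : Finset (ZMod 2)) = {0, 1} := by decide
  rw [hu, Finset.sum_insert (by decide), Finset.sum_singleton]

lemma summand_eq_prod {m : ℕ} (a x : Fin m → ZMod 2) :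
    (I : ℂ) ^ wt x * chi (dot a x) = ∏ j, ((I : ℂ) ^ (x j).val * chi (a j * x j)) := by
  rw [Finset.prod_mul_distrib, wt_eq_sum, Finset.prod_pow_eq_pow_sum, dot, chi_sum]

lemma S_eq {m : ℕ} (a : Fin m → ZMod 2) :
    ∑ x : Fin m → ZMod 2, (I : ℂ) ^ wt x * chi (dot a x) = ∏ j, (1 + I * chi (a j)) := by
  calc ∑ x : Fin m → ZMod 2, (I : ℂ) ^ wt x * chi (dot a x)
      = ∑ x : Fin m → ZMod 2, ∏ j, ((I : ℂ) ^ (x j).val * chi (a j * x j)) :=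
        Finset.sum_congr rfl fun x _ => summand_eq_prod a x
    _ = ∏ j, ∑ b : ZMod 2, ((I : ℂ) ^ (b : ZMod 2).val * chi (a j * b)) :=
        sum_pi_prod (fun j b => (I : ℂ) ^ (b : ZMod 2).val * chi (a j * b))
    _ = ∏ j, (1 + I * chi (a j)) := by
        refine Finset.prod_congr rfl fun j _ => ?_
        rw [sum_zmod2 (fun b => (I : ℂ) ^ (b : ZMod 2).val * chi (a j * b))]
        simp [chi_zero, ZMod.val_one, pow_one]

lemma I_pow_mod (w : ℕ) : (I : ℂ) ^ w = I ^ (w % 4) := by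
  conv_lhs => rw [← Nat.div_add_mod w 4]
  rw [pow_add, pow_mul]
  norm_num [show (I:ℂ)^4 = 1 by norm_num [pow_succ, Complex.I_mul_I]]

lemma exists_c (i1 i2 : ℕ) (h1 : i1 < 4) (h2 : i2 < 4) (hodd : Odd ((i1 : ℤ) - i2)) :
    ∃ c : ℂ, c * (starRingEnd ℂ) c = 2 ∧ (starRingEnd ℂ) (c ^ 2) = -(c ^ 2) ∧
      ∀ w : ℕ, 2 * ((-1 : ℂ) ^ (if w % 4 = i1 ∨ w % 4 = i2 then (1 : ZMod 2) else 0).val)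
        = c * I ^ w + (starRingEnd ℂ) (c * I ^ w) := by
  have hval : ∀ w : ℕ, w % 4 = 0 ∨ w % 4 = 1 ∨ w % 4 = 2 ∨ w % 4 = 3 := fun w => by omega
  have hpair : (i1 = 0 ∧ i2 = 1) ∨ (i1 = 1 ∧ i2 = 0) ∨ (i1 = 0 ∧ i2 = 3) ∨ (i1 = 3 ∧ i2 = 0)
      ∨ (i1 = 1 ∧ i2 = 2) ∨ (i1 = 2 ∧ i2 = 1) ∨ (i1 = 2 ∧ i2 = 3) ∨ (i1 = 3 ∧ i2 = 2) := by
    obtain ⟨k, hk⟩ := hodd; omega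
  rcases hpair with ⟨rfl, rfl⟩ | ⟨rfl, rfl⟩ | ⟨rfl, rfl⟩ | ⟨rfl, rfl⟩ | ⟨rfl, rfl⟩ | ⟨rfl, rfl⟩
    | ⟨rfl, rfl⟩ | ⟨rfl, rfl⟩
  · refine ⟨-1 + I, by norm_num [Complex.ext_iff], by norm_num [Complex.ext_iff, pow_succ],
      fun w => ?_⟩
    rw [I_pow_mod]
    rcases hval w with h | h | h | h <;> rw [h] <;>
      norm_num [Complex.ext_iff, ZMod.val_one, pow_succ, Complex.I_mul_I]
  · refine ⟨-1 + I, by norm_num [Complex.ext_iff], by norm_num [Complex.ext_iff, pow_succ],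
      fun w => ?_⟩
    rw [I_pow_mod]
    rcases hval w with h | h | h | h <;> rw [h] <;>
      norm_num [Complex.ext_iff, ZMod.val_one, pow_succ, Complex.I_mul_I]
  · refine ⟨-1 - I, by norm_num [Complex.ext_iff], by norm_num [Complex.ext_iff, pow_succ],
      fun w => ?_⟩
    rw [I_pow_mod]
    rcases hval w with h | h | h | h <;> rw [h] <;>
      norm_num [Complex.ext_iff, ZMod.val_one, pow_succ, Complex.I_mul_I]
  · refine ⟨-1 - I, by norm_num [Complex.ext_iff], by norm_num [Complex.ext_iff, pow_succ],
      fun w => ?_⟩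
    rw [I_pow_mod]
    rcases hval w with h | h | h | h <;> rw [h] <;>
      norm_num [Complex.ext_iff, ZMod.val_one, pow_succ, Complex.I_mul_I]
  · refine ⟨1 + I, by norm_num [Complex.ext_iff], by norm_num [Complex.ext_iff, pow_succ],
      fun w => ?_⟩
    rw [I_pow_mod]
    rcases hval w with h | h | h | h <;> rw [h] <;>
      norm_num [Complex.ext_iff, ZMod.val_one, pow_succ, Complex.I_mul_I]
  · refine ⟨1 + I, by norm_num [Complex.ext_iff], by norm_num [Complex.ext_iff, pow_succ],
      fun w => ?_⟩
    rw [I_pow_mod]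
    rcases hval w with h | h | h | h <;> rw [h] <;>
      norm_num [Complex.ext_iff, ZMod.val_one, pow_succ, Complex.I_mul_I]
  · refine ⟨1 - I, by norm_num [Complex.ext_iff], by norm_num [Complex.ext_iff, pow_succ],
      fun w => ?_⟩
    rw [I_pow_mod]
    rcases hval w with h | h | h | h <;> rw [h] <;>
      norm_num [Complex.ext_iff, ZMod.val_one, pow_succ, Complex.I_mul_I]
  · refine ⟨1 - I, by norm_num [Complex.ext_iff], by norm_num [Complex.ext_iff, pow_succ],
      fun w => ?_⟩
    rw [I_pow_mod]
    rcases hval w with h | h | h | h <;> rw [h] <;>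
      norm_num [Complex.ext_iff, ZMod.val_one, pow_succ, Complex.I_mul_I]

lemma forward (m : ℕ) (hme : Even m) (i1 i2 : ℕ) (h1 : i1 < 4) (h2 : i2 < 4)
    (hodd : Odd ((i1 : ℤ) - i2)) (a : Fin m → ZMod 2) :
    (∑ x : Fin m → ZMod 2, (-1 : ℤ) ^ (bf i1 i2 x + dot a x).val) ^ 2 = 2 ^ m := by
  obtain ⟨c, hc1, hc2, hval⟩ := exists_c i1 i2 h1 h2 hodd
  set S : ℂ := ∑ x : Fin m → ZMod 2, (I : ℂ) ^ wt x * chi (dot a x) with hS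
  set K : ℂ := ∑ x : Fin m → ZMod 2, (-1 : ℂ) ^ (bf i1 i2 x + dot a x).val with hK
  have hSprod : S = ∏ j, (1 + I * chi (a j)) := S_eq a
  have hconjS : (starRingEnd ℂ) S = ∏ j, (1 - I * chi (a j)) := by
    rw [hSprod, map_prod]
    refine Finset.prod_congr rfl fun j _ => ?_
    rw [map_add, map_one, map_mul, Complex.conj_I, conj_chi]; ring
  have hSS : S * (starRingEnd ℂ) S = 2 ^ m := by
    rw [hconjS, hSprod, ← Finset.prod_mul_distrib]
    have h2m : (2 : ℂ) ^ m = ∏ _j : Fin m, (2 : ℂ) := by simp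
    rw [h2m]
    refine Finset.prod_congr rfl fun j _ => ?_
    have he := chi_mul_self (R := ℂ) (a j)
    linear_combination (-(I:ℂ)^2) * he - Complex.I_sq
  have hS2 : S ^ 2 = (2 * I) ^ m * chi (∑ j, a j) := by
    rw [hSprod, ← Finset.prod_pow, chi_sum]
    have h2m : ((2:ℂ) * I) ^ m = ∏ _j : Fin m, ((2:ℂ) * I) := by simp
    rw [h2m, ← Finset.prod_mul_distrib]
    refine Finset.prod_congr rfl fun j _ => ?_
    have he := chi_mul_self (R := ℂ) (a j)
    linear_combination (I:ℂ)^2 * he + Complex.I_sq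
  have hconjS2 : (starRingEnd ℂ) S = ∑ x : Fin m → ZMod 2,
      (starRingEnd ℂ) ((I:ℂ) ^ wt x) * chi (dot a x) := by
    rw [hS, map_sum]
    exact Finset.sum_congr rfl fun x _ => by rw [map_mul, conj_chi]
  have h2K : 2 * K = c * S + (starRingEnd ℂ) c * (starRingEnd ℂ) S := by
    have hx : ∀ x : Fin m → ZMod 2, 2 * ((-1:ℂ) ^ (bf i1 i2 x + dot a x).val)
        = c * (I ^ wt x * chi (dot a x))
          + (starRingEnd ℂ) c * ((starRingEnd ℂ) ((I:ℂ) ^ wt x) * chi (dot a x)) := by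
      intro x
      have hadd : ((-1:ℂ) ^ (bf i1 i2 x + dot a x).val)
          = chi (bf i1 i2 x) * chi (dot a x) := chi_add _ _
      have h2 : 2 * (chi (bf i1 i2 x) : ℂ)
          = c * I ^ wt x + (starRingEnd ℂ) (c * I ^ wt x) := hval (wt x)
      rw [hadd, ← mul_assoc, h2, map_mul]
      ring
    calc 2 * K = ∑ x : Fin m → ZMod 2, (c * (I ^ wt x * chi (dot a x))
          + (starRingEnd ℂ) c * ((starRingEnd ℂ) ((I:ℂ) ^ wt x) * chi (dot a x))) := by
          rw [hK, Finset.mul_sum]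
          exact Finset.sum_congr rfl fun x _ => hx x
      _ = c * S + (starRingEnd ℂ) c * (starRingEnd ℂ) S := by
          rw [Finset.sum_add_distrib, ← Finset.mul_sum, ← Finset.mul_sum, ← hS, ← hconjS2]
  have hconjε : (starRingEnd ℂ) (chi (∑ j, a j) : ℂ) = chi (∑ j, a j) := conj_chi _
  have hconj2I : (starRingEnd ℂ) (((2:ℂ) * I) ^ m) = (2 * I) ^ m := by
    rw [map_pow, map_mul, Complex.conj_I]
    rw [show (starRingEnd ℂ) 2 = 2 from map_ofNat _ 2]
    rw [show (2:ℂ) * -I = -(2 * I) by ring, hme.neg_pow]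
  have key : (2 * K) ^ 2 = 2 ^ (m + 2) := by
    rw [h2K]
    have expand : (c * S + (starRingEnd ℂ) c * (starRingEnd ℂ) S) ^ 2
        = c ^ 2 * S ^ 2 + ((starRingEnd ℂ) c) ^ 2 * ((starRingEnd ℂ) S) ^ 2
          + 2 * (c * (starRingEnd ℂ) c) * (S * (starRingEnd ℂ) S) := by ring
    rw [expand, hSS, hc1, ← map_pow, ← map_pow, hc2, hS2, map_mul, hconj2I, hconjε, pow_add]
    ring
  have hK2 : K ^ 2 = 2 ^ m := by
    have h4 : (2 : ℂ) ^ 2 * K ^ 2 = 2 ^ 2 * 2 ^ m := by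
      rw [← mul_pow, key, pow_add]; ring
    exact mul_left_cancel₀ (by norm_num : ((2 : ℂ) ^ 2) ≠ 0) h4
  have hcast : ((∑ x : Fin m → ZMod 2, (-1 : ℤ) ^ (bf i1 i2 x + dot a x).val : ℤ) : ℂ) = K := by
    rw [hK]; push_cast; rfl
  have hfin := hK2
  rw [← hcast] at hfin
  exact_mod_cast hfin

lemma sum_chi_zero {m : ℕ} (hm : 0 < m) :
    ∑ x : Fin m → ZMod 2, (-1 : ℤ) ^ wt x = 0 := by
  have hx : ∀ x : Fin m → ZMod 2, (-1 : ℤ) ^ wt x = ∏ j, (chi (x j) : ℤ) := by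
    intro x; rw [wt_eq_sum, ← Finset.prod_pow_eq_pow_sum]; rfl
  rw [Finset.sum_congr rfl fun x _ => hx x,
    sum_pi_prod (fun _ b => (chi b : ℤ))]
  have hz : ∀ j : Fin m, ∑ b : ZMod 2, (chi b : ℤ) = 0 := by
    intro j
    rw [sum_zmod2 (fun b => (chi b : ℤ)), chi_zero, chi_one]
    ring
  rw [Finset.prod_congr rfl fun j _ => hz j, Finset.prod_const]
  simp [hm.ne']

lemma sum_at_zero {m : ℕ} (hm : 0 < m) (i1 i2 : ℕ) (h1 : i1 < 4) (h2 : i2 < 4)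
    (hne : i1 ≠ i2) (hpar : i1 % 2 = i2 % 2) :
    ∑ x : Fin m → ZMod 2, (-1 : ℤ) ^ (bf i1 i2 x + dot 0 x).val = 0 := by
  have hiff : ∀ w : ℕ, (w % 4 = i1 ∨ w % 4 = i2) ↔ w % 2 = i1 % 2 := fun w => by omega
  have hx : ∀ x : Fin m → ZMod 2, (-1 : ℤ) ^ (bf i1 i2 x + dot 0 x).val
      = (-1) ^ (i1 % 2 + 1) * (-1) ^ wt x := by
    intro x
    have hd : dot (0 : Fin m → ZMod 2) x = 0 := by simp [dot]
    rw [hd, add_zero]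
    unfold bf
    rw [if_congr (hiff (wt x)) rfl rfl]
    by_cases hcase : wt x % 2 = i1 % 2
    · rw [if_pos hcase, ZMod.val_one, pow_one,
        neg_one_pow_eq_pow_mod_two (n := wt x), hcase, ← pow_add]
      have hoddn : Odd (i1 % 2 + 1 + i1 % 2) := ⟨i1 % 2, by ring⟩
      rw [hoddn.neg_one_pow]
    · rw [if_neg hcase, ZMod.val_zero, pow_zero,
        neg_one_pow_eq_pow_mod_two (n := wt x)]
      have hw : wt x % 2 = 1 - i1 % 2 := by omega
      rw [hw, ← pow_add]
      have hev : Even (i1 % 2 + 1 + (1 - i1 % 2)) := ⟨1, by omega⟩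
      rw [hev.neg_one_pow]
  rw [Finset.sum_congr rfl fun x _ => hx x, ← Finset.mul_sum, sum_chi_zero hm, mul_zero]

end BentAux

theorem stmt_7 (m : ℕ) (hm : 4 ≤ m) (hme : Even m) (i₁ i₂ : ℕ) (h₁ : i₁ < 4) (h₂ : i₂ < 4)
    (hne : i₁ ≠ i₂) :
    (∀ a : Fin m → ZMod 2,
        (∑ x : Fin m → ZMod 2, (-1 : ℤ) ^ (bf i₁ i₂ x + dot a x).val) ^ 2 = 2 ^ m)
      ↔ Odd ((i₁ : ℤ) - i₂) := by
  constructor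
  · intro H
    by_contra hodd
    rw [Int.not_odd_iff_even] at hodd
    obtain ⟨k, hk⟩ := hodd
    have hpar : i₁ % 2 = i₂ % 2 := by omega
    have h0 := H 0
    rw [sum_at_zero (by omega) i₁ i₂ h₁ h₂ hne hpar] at h0
    have hpos : (0 : ℤ) < 2 ^ m := by positivity
    norm_num at h0
    linarith [h0, hpos]
  · intro hodd a
    exact forward m hme i₁ i₂ h₁ h₂ hodd a
end

section
/- Let m ≥ 2 with m ≡ 2 (mod 8). Then wt(f_{0,1}) = wt(f_{1,2}) = 2^{m-1} + 2^{(m-2)/2} and wt(f_{2,3}) = wt(f_{0,3}) = 2^{m-1} - 2^{(m-2)/2}, where wt(f) denotes the number of x ∈ F_2^m with f(x) = 1. -/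
open Finset

/-! Let `N r` be the number of `x` with `wt x ≡ r (mod 4)`; each `f_{i₁,i₂}` has weight
`N i₁ + N i₂`. Evaluating the weight enumerator `∑ₓ z ^ wt x = (1 + z) ^ m` at `z = 1, -1, i`
gives `∑ N r = 2 ^ m`, `N 0 + N 2 = N 1 + N 3` and `(N 0 - N 2) + (N 1 - N 3) i = (1 + i) ^ m`.
For `m = 8t + 2` we have `(1 + i) ^ m = (2i) ^ (4t + 1) = 2 ^ (4t + 1) i`, and the four
counts are determined. -/
lemma pow_wt_eq_prod {R : Type*} [CommMonoid R] (z : R) {m : ℕ} (x : Fin m → ZMod 2) :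
    z ^ wt x = ∏ i, if x i = 1 then z else 1 := by
  rw [← prod_filter, prod_const, wt]

lemma sum_pow_wt {R : Type*} [CommSemiring R] (z : R) (m : ℕ) :
    ∑ x : Fin m → ZMod 2, z ^ wt x = (1 + z) ^ m := by
  have h : ∑ a : ZMod 2, (if a = 1 then z else 1) = 1 + z := by
    rw [show (univ : Finset (ZMod 2)) = {0, 1} from rfl, sum_pair zero_ne_one]
    simp
  simp_rw [pow_wt_eq_prod, ← h, Fintype.sum_pow]

def wtModFourCount (m r : ℕ) : ℕ := #{x : Fin m → ZMod 2 | wt x % 4 = r}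

lemma sum_pow_wt_of_pow_four_eq_one {R : Type*} [CommSemiring R] {z : R} (hz : z ^ 4 = 1) (m : ℕ) :
    ∑ x : Fin m → ZMod 2, z ^ wt x = ∑ r ∈ range 4, (wtModFourCount m r : R) * z ^ r := by
  rw [sum_congr rfl fun x _ => pow_eq_pow_mod (wt x) hz]
  rw [← sum_fiberwise_of_maps_to (g := fun x => wt x % 4) (t := range 4)
    fun x _ => mem_range.2 (Nat.mod_lt _ (by norm_num))]
  refine sum_congr rfl fun r _ => ?_
  rw [sum_congr rfl fun x hx => by rw [(mem_filter.1 hx).2], sum_const, nsmul_eq_mul,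
    wtModFourCount]

lemma card_filter_bf_eq_one {a b : ℕ} (hab : a ≠ b) (m : ℕ) :
    #{x : Fin m → ZMod 2 | bf a b x = 1} = wtModFourCount m a + wtModFourCount m b := by
  have hbf : ∀ x : Fin m → ZMod 2, bf a b x = 1 ↔ wt x % 4 = a ∨ wt x % 4 = b := fun x => by
    unfold bf; split_ifs with h <;> simp [h]
  simp_rw [hbf, filter_or, wtModFourCount]
  exact card_union_of_disjoint (disjoint_filter.2 fun x _ ha hb => hab (ha.symm.trans hb))

lemma sum_wtModFourCount (m : ℕ) :
    wtModFourCount m 0 + wtModFourCount m 1 + wtModFourCount m 2 + wtModFourCount m 3 = 2 ^ m := by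
  have h := sum_pow_wt_of_pow_four_eq_one (one_pow 4 : (1 : ℕ) ^ 4 = 1) m
  rw [sum_pow_wt] at h
  simp only [sum_range_succ, sum_range_zero, one_pow, mul_one, zero_add, Nat.cast_id] at h
  exact h.symm

lemma wtModFourCount_even_eq_odd {m : ℕ} (hm : m ≠ 0) :
    wtModFourCount m 0 + wtModFourCount m 2 = wtModFourCount m 1 + wtModFourCount m 3 := by
  have h := sum_pow_wt_of_pow_four_eq_one (by norm_num : (-1 : ℤ) ^ 4 = 1) m
  rw [sum_pow_wt, add_neg_cancel, zero_pow hm] at h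
  simp only [sum_range_succ, sum_range_zero] at h
  norm_num at h
  omega

lemma wtModFourCount_sub_eq_re_im (m : ℕ) :
    (wtModFourCount m 0 : ℤ) - wtModFourCount m 2 = ((1 + Zsqrtd.sqrtd : GaussianInt) ^ m).re ∧
      (wtModFourCount m 1 : ℤ) - wtModFourCount m 3 = ((1 + Zsqrtd.sqrtd : GaussianInt) ^ m).im := by
  have hi4 : (Zsqrtd.sqrtd : GaussianInt) ^ 4 = 1 := by decide
  have h := sum_pow_wt_of_pow_four_eq_one hi4 m
  rw [sum_pow_wt] at h
  rw [h]
  simp [sum_range_succ, pow_succ, sub_eq_add_neg]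

lemma one_add_sqrtd_pow_eight_mul_add_two (t : ℕ) :
    (1 + Zsqrtd.sqrtd : GaussianInt) ^ (8 * t + 2) = ⟨0, 2 ^ (4 * t + 1)⟩ := by
  have hsq : (1 + Zsqrtd.sqrtd : GaussianInt) ^ 2 = 2 * Zsqrtd.sqrtd := by decide
  have hi4 : (Zsqrtd.sqrtd : GaussianInt) ^ 4 = 1 := by decide
  have hi : (Zsqrtd.sqrtd : GaussianInt) ^ (4 * t + 1) = Zsqrtd.sqrtd := by
    rw [pow_succ, pow_mul, hi4, one_pow, one_mul]
  have h2 : (2 : GaussianInt) ^ (4 * t + 1) = ((2 ^ (4 * t + 1) : ℤ) : GaussianInt) := by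
    push_cast; rfl
  rw [show 8 * t + 2 = 2 * (4 * t + 1) by ring, pow_mul, hsq, mul_pow, hi, h2]
  ext <;> simp only [Zsqrtd.re_mul, Zsqrtd.im_mul, Zsqrtd.re_intCast, Zsqrtd.im_intCast,
    Zsqrtd.re_sqrtd, Zsqrtd.im_sqrtd] <;> ring

lemma wtModFourCount_eight_mul_add_two (t : ℕ) :
    wtModFourCount (8 * t + 2) 0 = 2 ^ (8 * t) ∧
      wtModFourCount (8 * t + 2) 1 = 2 ^ (8 * t) + 2 ^ (4 * t) ∧
      wtModFourCount (8 * t + 2) 2 = 2 ^ (8 * t) ∧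
      wtModFourCount (8 * t + 2) 3 + 2 ^ (4 * t) = 2 ^ (8 * t) := by
  have htotal := sum_wtModFourCount (8 * t + 2)
  have hparity := wtModFourCount_even_eq_odd (m := 8 * t + 2) (by omega)
  obtain ⟨h02, h13⟩ := wtModFourCount_sub_eq_re_im (8 * t + 2)
  rw [one_add_sqrtd_pow_eight_mul_add_two] at h02 h13
  have e1 : 2 ^ (8 * t + 2) = 4 * 2 ^ (8 * t) := by ring
  have e2 : (2 : ℤ) ^ (4 * t + 1) = 2 * ((2 ^ (4 * t) : ℕ) : ℤ) := by push_cast; ring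
  rw [e1] at htotal
  simp only [e2] at h02 h13
  omega

theorem stmt_11_general (m : ℕ) (h8 : m % 8 = 2) :
    (Finset.univ.filter (fun x : Fin m → ZMod 2 => bf 0 1 x = 1)).card
        = 2 ^ (m - 1) + 2 ^ ((m - 2) / 2) ∧
      (Finset.univ.filter (fun x : Fin m → ZMod 2 => bf 1 2 x = 1)).card
        = 2 ^ (m - 1) + 2 ^ ((m - 2) / 2) ∧
      (Finset.univ.filter (fun x : Fin m → ZMod 2 => bf 2 3 x = 1)).card
        = 2 ^ (m - 1) - 2 ^ ((m - 2) / 2) ∧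
      (Finset.univ.filter (fun x : Fin m → ZMod 2 => bf 0 3 x = 1)).card
        = 2 ^ (m - 1) - 2 ^ ((m - 2) / 2) := by
  obtain ⟨t, rfl⟩ : ∃ t, m = 8 * t + 2 := ⟨m / 8, by omega⟩
  obtain ⟨h0, h1, h2, h3⟩ := wtModFourCount_eight_mul_add_two t
  simp (disch := decide) only [card_filter_bf_eq_one]
  rw [show 8 * t + 2 - 1 = 8 * t + 1 by omega, show (8 * t + 2 - 2) / 2 = 4 * t by omega,
    pow_succ]
  omega

theorem stmt_11 (m : ℕ) (hm : 2 ≤ m) (h8 : m % 8 = 2) :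
    (Finset.univ.filter (fun x : Fin m → ZMod 2 => bf 0 1 x = 1)).card
        = 2 ^ (m - 1) + 2 ^ ((m - 2) / 2) ∧
      (Finset.univ.filter (fun x : Fin m → ZMod 2 => bf 1 2 x = 1)).card
        = 2 ^ (m - 1) + 2 ^ ((m - 2) / 2) ∧
      (Finset.univ.filter (fun x : Fin m → ZMod 2 => bf 2 3 x = 1)).card
        = 2 ^ (m - 1) - 2 ^ ((m - 2) / 2) ∧
      (Finset.univ.filter (fun x : Fin m → ZMod 2 => bf 0 3 x = 1)).card
        = 2 ^ (m - 1) - 2 ^ ((m - 2) / 2) :=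
  stmt_11_general m h8
end

section
/- Let m ≥ 4 with m ≡ 2 (mod 8). Then the bent functions f_{2,3} and f_{0,1} are self-dual: for f ∈ {f_{2,3}, f_{0,1}} and every y ∈ F_2^m, ∑_{x ∈ F_2^m} (-1)^{f(x) + x·y} = 2^{m/2} · (-1)^{f(y)}. -/
open Finset

namespace SelfDualAux

abbrev G := GaussianInt

def I : G := ⟨0, 1⟩

lemma I_sq : I ^ 2 = -1 := by decide

lemma chiG_add (a b : ZMod 2) :
    ((-1 : G)) ^ ((a + b).val) = (-1) ^ a.val * (-1) ^ b.val := by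
  revert a b; decide

lemma chiG_sum {ι : Type*} (s : Finset ι) (g : ι → ZMod 2) :
    ((-1 : G)) ^ ((∑ i ∈ s, g i).val) = ∏ i ∈ s, (-1 : G) ^ ((g i).val) := by
  induction s using Finset.cons_induction with
  | empty => simp
  | cons a s ha ih => rw [Finset.sum_cons, Finset.prod_cons, chiG_add, ih]

lemma wt_eq_sum {m : ℕ} (x : Fin m → ZMod 2) : wt x = ∑ i, (x i).val := by
  have h : ∀ a : ZMod 2, (if a = 1 then 1 else 0) = a.val := by decide
  rw [wt, Finset.card_filter]
  exact Finset.sum_congr rfl fun i _ => h (x i)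

lemma pow_mod4 (z : G) (hz : z ^ 4 = 1) (n : ℕ) : z ^ n = z ^ (n % 4) := by
  conv_lhs => rw [← Nat.div_add_mod n 4]
  rw [pow_add, pow_mul, hz, one_pow, one_mul]

lemma key (n : ℕ) :
    (1 - I) * I ^ n + (1 + I) * (-I) ^ n
      = if n % 4 = 2 ∨ n % 4 = 3 then -2 else 2 := by
  rw [pow_mod4 I (by decide), pow_mod4 (-I) (by decide)]
  have h : n % 4 < 4 := Nat.mod_lt _ (by norm_num)
  set k := n % 4 with hk
  interval_cases k <;> decide

lemma twochi {m : ℕ} (x : Fin m → ZMod 2) :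
    (2 : G) * (-1) ^ ((bf 2 3 x).val)
      = (1 - I) * I ^ (wt x) + (1 + I) * (-I) ^ (wt x) := by
  rw [key (wt x)]
  unfold bf
  split_ifs with h <;> decide

lemma sumA {m : ℕ} (y : Fin m → ZMod 2) :
    ∑ x : Fin m → ZMod 2, I ^ (wt x) * (-1 : G) ^ ((dot x y).val)
      = (1 + I) ^ m * (-I) ^ (wt y) := by
  have step : ∀ x : Fin m → ZMod 2,
      I ^ (wt x) * (-1 : G) ^ ((dot x y).val)
        = ∏ j, (I ^ ((x j).val) * (-1 : G) ^ (((x j) * (y j)).val)) := by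
    intro x
    rw [wt_eq_sum, ← Finset.prod_pow_eq_pow_sum, dot, chiG_sum,
      ← Finset.prod_mul_distrib]
  simp only [step]
  rw [← Fintype.piFinset_univ,
    ← Finset.prod_univ_sum (fun _ : Fin m => (univ : Finset (ZMod 2)))
      (fun j b => I ^ (b.val) * (-1 : G) ^ ((b * y j).val))]
  have coord : ∀ c : ZMod 2,
      (∑ b : ZMod 2, I ^ (b.val) * (-1 : G) ^ ((b * c).val))
        = (1 + I) * (-I) ^ (c.val) := by decide
  simp only [coord]
  rw [Finset.prod_mul_distrib, Finset.prod_const, Finset.card_univ,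
    Fintype.card_fin, Finset.prod_pow_eq_pow_sum, ← wt_eq_sum]

lemma sumB {m : ℕ} (y : Fin m → ZMod 2) :
    ∑ x : Fin m → ZMod 2, (-I) ^ (wt x) * (-1 : G) ^ ((dot x y).val)
      = (1 - I) ^ m * I ^ (wt y) := by
  have step : ∀ x : Fin m → ZMod 2,
      (-I) ^ (wt x) * (-1 : G) ^ ((dot x y).val)
        = ∏ j, ((-I) ^ ((x j).val) * (-1 : G) ^ (((x j) * (y j)).val)) := by
    intro x
    rw [wt_eq_sum, ← Finset.prod_pow_eq_pow_sum, dot, chiG_sum,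
      ← Finset.prod_mul_distrib]
  simp only [step]
  rw [← Fintype.piFinset_univ,
    ← Finset.prod_univ_sum (fun _ : Fin m => (univ : Finset (ZMod 2)))
      (fun j b => (-I) ^ (b.val) * (-1 : G) ^ ((b * y j).val))]
  have coord : ∀ c : ZMod 2,
      (∑ b : ZMod 2, (-I) ^ (b.val) * (-1 : G) ^ ((b * c).val))
        = (1 - I) * I ^ (c.val) := by decide
  simp only [coord]
  rw [Finset.prod_mul_distrib, Finset.prod_const, Finset.card_univ,
    Fintype.card_fin, Finset.prod_pow_eq_pow_sum, ← wt_eq_sum]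

lemma pow1 (m : ℕ) (h8 : m % 8 = 2) : (1 + I) ^ m = 2 ^ (m / 2) * I := by
  have hm2 : m = 2 * (m / 2) := by omega
  have h4 : (m / 2) % 4 = 1 := by omega
  calc (1 + I) ^ m = ((1 + I) ^ 2) ^ (m / 2) := by rw [← pow_mul, ← hm2]
    _ = (2 * I) ^ (m / 2) := by rw [show ((1 : G) + I) ^ 2 = 2 * I from by decide]
    _ = 2 ^ (m / 2) * I ^ (m / 2) := mul_pow _ _ _
    _ = 2 ^ (m / 2) * I := by rw [pow_mod4 I (by decide), h4, pow_one]

lemma pow2 (m : ℕ) (h8 : m % 8 = 2) : (1 - I) ^ m = 2 ^ (m / 2) * (-I) := by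
  have hm2 : m = 2 * (m / 2) := by omega
  have h4 : (m / 2) % 4 = 1 := by omega
  have hodd : Odd (m / 2) := Nat.odd_iff.2 (by omega)
  calc (1 - I) ^ m = ((1 - I) ^ 2) ^ (m / 2) := by rw [← pow_mul, ← hm2]
    _ = (-(2 * I)) ^ (m / 2) := by rw [show ((1 : G) - I) ^ 2 = -(2 * I) from by decide]
    _ = -((2 * I) ^ (m / 2)) := hodd.neg_pow _
    _ = -(2 ^ (m / 2) * I ^ (m / 2)) := by rw [mul_pow]
    _ = 2 ^ (m / 2) * (-I) := by
        rw [pow_mod4 I (by decide), h4, pow_one, mul_neg]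

lemma main23G {m : ℕ} (h8 : m % 8 = 2) (y : Fin m → ZMod 2) :
    ∑ x : Fin m → ZMod 2, (-1 : G) ^ ((bf 2 3 x + dot x y).val)
      = 2 ^ (m / 2) * (-1 : G) ^ ((bf 2 3 y).val) := by
  apply mul_left_cancel₀ (show (2 : G) ≠ 0 by decide)
  calc (2 : G) * ∑ x : Fin m → ZMod 2, (-1 : G) ^ ((bf 2 3 x + dot x y).val)
      = ∑ x : Fin m → ZMod 2,
          ((1 - I) * (I ^ (wt x) * (-1 : G) ^ ((dot x y).val))
            + (1 + I) * ((-I) ^ (wt x) * (-1 : G) ^ ((dot x y).val))) := by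
        rw [Finset.mul_sum]
        refine Finset.sum_congr rfl fun x _ => ?_
        rw [chiG_add]
        have h := twochi x
        linear_combination ((-1 : G) ^ ((dot x y).val)) * h
    _ = (1 - I) * ((1 + I) ^ m * (-I) ^ (wt y))
          + (1 + I) * ((1 - I) ^ m * I ^ (wt y)) := by
        rw [Finset.sum_add_distrib, ← Finset.mul_sum, ← Finset.mul_sum, sumA, sumB]
    _ = (1 - I) * ((2 ^ (m / 2) * I) * (-I) ^ (wt y))
          + (1 + I) * ((2 ^ (m / 2) * (-I)) * I ^ (wt y)) := by
        rw [pow1 m h8, pow2 m h8]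
    _ = 2 ^ (m / 2) * ((1 - I) * I ^ (wt y) + (1 + I) * (-I) ^ (wt y)) := by
        linear_combination (-((2 : G) ^ (m / 2)) * I ^ (wt y) * ((-1 : G) ^ (wt y) + 1)) * I_sq
    _ = 2 ^ (m / 2) * ((2 : G) * (-1) ^ ((bf 2 3 y).val)) := by rw [← twochi]
    _ = 2 * (2 ^ (m / 2) * (-1 : G) ^ ((bf 2 3 y).val)) := by ring

lemma main23Z {m : ℕ} (h8 : m % 8 = 2) (y : Fin m → ZMod 2) :
    ∑ x : Fin m → ZMod 2, (-1 : ℤ) ^ ((bf 2 3 x + dot x y).val)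
      = 2 ^ (m / 2) * (-1 : ℤ) ^ ((bf 2 3 y).val) := by
  have h := main23G h8 y
  apply Int.cast_injective (α := G)
  push_cast
  exact h

lemma bf01_eq {m : ℕ} (x : Fin m → ZMod 2) : bf 0 1 x = 1 + bf 2 3 x := by
  unfold bf
  have h4 : wt x % 4 < 4 := Nat.mod_lt _ (by norm_num)
  split_ifs with h1 h2 <;> first | decide | omega

lemma chiZ_one_add (a : ZMod 2) :
    (-1 : ℤ) ^ ((1 + a).val) = -(-1 : ℤ) ^ (a.val) := by
  revert a; decide

end SelfDualAux

theorem stmt_13 (m : ℕ) (hm : 4 ≤ m) (h8 : m % 8 = 2) :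
    ∀ f ∈ ({@bf 2 3 m, @bf 0 1 m} : Set ((Fin m → ZMod 2) → ZMod 2)),
      ∀ y : Fin m → ZMod 2,
        (∑ x : Fin m → ZMod 2, (-1 : ℤ) ^ (f x + dot x y).val)
          = 2 ^ (m / 2) * (-1 : ℤ) ^ (f y).val := by
  intro f hf y
  simp only [Set.mem_insert_iff, Set.mem_singleton_iff] at hf
  rcases hf with rfl | rfl
  · exact SelfDualAux.main23Z h8 y
  · have step : ∀ x : Fin m → ZMod 2,
        (-1 : ℤ) ^ ((bf 0 1 x + dot x y).val)
          = -(-1 : ℤ) ^ ((bf 2 3 x + dot x y).val) := by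
      intro x
      rw [SelfDualAux.bf01_eq, add_assoc, SelfDualAux.chiZ_one_add]
    simp only [step]
    rw [Finset.sum_neg_distrib, SelfDualAux.main23Z h8 y, SelfDualAux.bf01_eq y,
      SelfDualAux.chiZ_one_add]
    ring
end

section
/- Let m ≥ 4 with m ≡ 2 (mod 8). Then the bent functions f_{0,3} and f_{1,2} are anti-self-dual: for f ∈ {f_{0,3}, f_{1,2}} and every y ∈ F_2^m, ∑_{x ∈ F_2^m} (-1)^{f(x) + x·y} = -2^{m/2} · (-1)^{f(y)}. -/
open Finset

/-!
Write `(-1)^{f_{0,3}(x)} = -Re((1+i) i^{wt x})`. The Walsh transform of `x ↦ i^{wt x}` factors over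
the coordinates: `∑ₓ i^{wt x} (-1)^{x·y} = ∏ⱼ (1 + i (-1)^{yⱼ}) = (1+i)^m (-i)^{wt y}`, and
`(1+i)^m = 2^{m/2} i` when `m ≡ 2 (mod 8)`. So the transform of `f_{0,3}` at `y` is
`-2^{m/2} Re(conj(-(1+i) i^{wt y})) = -2^{m/2} (-1)^{f_{0,3}(y)}`. Finally `f_{1,2} = f_{0,3} + 1`,
and complementing preserves anti-self-duality.
-/

open Complex ComplexConjugate

lemma wt_eq_sum_val {m : ℕ} (x : Fin m → ZMod 2) : wt x = ∑ i, (x i).val := by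
  rw [wt, card_filter]
  refine sum_congr rfl fun i _ => ?_
  obtain h | h : x i = 0 ∨ x i = 1 := by generalize x i = c; revert c; decide
  all_goals simp [h, ZMod.val_one]

section CharacterSum

variable {R : Type*} [CommRing R]

lemma neg_one_pow_val_add (a b : ZMod 2) :
    (-1 : R) ^ (a + b).val = (-1) ^ a.val * (-1) ^ b.val := by
  rw [← pow_add, neg_one_pow_eq_pow_mod_two (a.val + b.val), ZMod.val_add]

lemma neg_one_pow_val_sum {ι : Type*} (s : Finset ι) (c : ι → ZMod 2) :
    (-1 : R) ^ (∑ i ∈ s, c i).val = ∏ i ∈ s, (-1) ^ (c i).val := by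
  classical
  induction s using Finset.induction_on with
  | empty => simp
  | insert i s hi ih => rw [sum_insert hi, prod_insert hi, neg_one_pow_val_add, ih]

lemma sum_pow_wt_mul_neg_one_pow_dot (a : R) {m : ℕ} (y : Fin m → ZMod 2) :
    ∑ x : Fin m → ZMod 2, a ^ wt x * (-1) ^ (dot x y).val = ∏ i, (1 + a * (-1) ^ (y i).val) := by
  have h (c : ZMod 2) : 1 + a * (-1) ^ c.val = ∑ b : ZMod 2, a ^ b.val * (-1) ^ (b * c).val := by
    rw [show (univ : Finset (ZMod 2)) = {0, 1} from rfl, sum_pair zero_ne_one]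
    simp [ZMod.val_one]
  simp_rw [h, Fintype.prod_sum, wt_eq_sum_val, dot, neg_one_pow_val_sum, ← prod_pow_eq_pow_sum,
    prod_mul_distrib]

end CharacterSum

lemma prod_one_add_I_mul_neg_one_pow {m : ℕ} (y : Fin m → ZMod 2) :
    ∏ i, (1 + I * (-1) ^ (y i).val) = (1 + I) ^ m * (-I) ^ wt y := by
  have h (c : ZMod 2) : 1 + I * (-1) ^ c.val = (1 + I) * (-I) ^ c.val := by
    obtain rfl | rfl : c = 0 ∨ c = 1 := by revert c; decide
    · simp
    · simp [ZMod.val_one]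
      linear_combination I_sq
  simp_rw [h, prod_mul_distrib, prod_const, card_univ, Fintype.card_fin, prod_pow_eq_pow_sum,
    wt_eq_sum_val]

lemma one_add_I_pow_of_mod_eight_eq_two {m : ℕ} (hm : m % 8 = 2) :
    (1 + I) ^ m = 2 ^ (m / 2) * I := by
  have h2 : (1 + I) ^ 2 = 2 * I := by linear_combination I_sq
  rw [show m = 2 * (m / 2) by omega, pow_mul, h2, mul_pow, I_pow_eq_pow_mod (m / 2),
    show m / 2 % 4 = 1 by omega, pow_one, show 2 * (m / 2) / 2 = m / 2 by omega]

lemma neg_one_pow_bf_zero_three {m : ℕ} (x : Fin m → ZMod 2) :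
    (-1 : ℝ) ^ (bf 0 3 x).val = -((1 + I) * I ^ wt x).re := by
  rw [bf, I_pow_eq_pow_mod]
  have := Nat.mod_lt (wt x) four_pos
  generalize wt x % 4 = r at *
  interval_cases r <;> simp [ZMod.val_one]

def IsAntiSelfDual {m : ℕ} (f : (Fin m → ZMod 2) → ZMod 2) : Prop :=
  ∀ y, ∑ x, (-1 : ℤ) ^ (f x + dot x y).val = -(2 ^ (m / 2)) * (-1) ^ (f y).val

lemma IsAntiSelfDual.add_one {m : ℕ} {f : (Fin m → ZMod 2) → ZMod 2} (hf : IsAntiSelfDual f) :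
    IsAntiSelfDual (fun x => f x + 1) := by
  intro y
  have h1 : (-1 : ℤ) ^ (1 : ZMod 2).val = -1 := by simp [ZMod.val_one]
  simp only [add_right_comm _ (1 : ZMod 2), neg_one_pow_val_add _ (1 : ZMod 2), h1, mul_neg_one,
    sum_neg_distrib]
  rw [hf y]
  ring

lemma isAntiSelfDual_bf_zero_three {m : ℕ} (hm : m % 8 = 2) : IsAntiSelfDual (@bf 0 3 m) := by
  intro y
  apply Int.cast_injective (α := ℝ)
  push_cast
  calc ∑ x, (-1 : ℝ) ^ (bf 0 3 x + dot x y).val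
      = ∑ x, -((1 + I) * I ^ wt x).re * (-1) ^ (dot x y).val := by
        simp_rw [neg_one_pow_val_add, neg_one_pow_bf_zero_three]
    _ = -((1 + I) * ∑ x, I ^ wt x * (-1) ^ (dot x y).val).re := by
        simp_rw [mul_sum, re_sum, ← sum_neg_distrib, ← mul_assoc]
        refine sum_congr rfl fun x _ => ?_
        rw [show (-1 : ℂ) ^ (dot x y).val = ((-1 : ℝ) ^ (dot x y).val : ℝ) by push_cast; rfl,
          re_mul_ofReal, neg_mul]
    _ = -(ofReal (2 ^ (m / 2)) * conj (-(1 + I) * I ^ wt y)).re := by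
        rw [sum_pow_wt_mul_neg_one_pow_dot, prod_one_add_I_mul_neg_one_pow,
          one_add_I_pow_of_mod_eight_eq_two hm]
        simp only [map_mul, map_neg, map_add, map_one, map_pow, conj_I]
        congr 2
        push_cast
        linear_combination (2 ^ (m / 2) * (-I) ^ wt y) * I_sq
    _ = -2 ^ (m / 2) * (-1) ^ (bf 0 3 y).val := by
        rw [re_ofReal_mul, conj_re, neg_one_pow_bf_zero_three, neg_mul, neg_re]
        ring

lemma bf_one_two_eq_bf_zero_three_add_one {m : ℕ} (x : Fin m → ZMod 2) :
    bf 1 2 x = bf 0 3 x + 1 := by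
  unfold bf
  have := Nat.mod_lt (wt x) four_pos
  generalize wt x % 4 = r at *
  interval_cases r <;> decide

theorem stmt_14_general (m : ℕ) (h8 : m % 8 = 2) :
    ∀ f ∈ ({@bf 0 3 m, @bf 1 2 m} : Set ((Fin m → ZMod 2) → ZMod 2)),
      ∀ y : Fin m → ZMod 2,
        (∑ x : Fin m → ZMod 2, (-1 : ℤ) ^ (f x + dot x y).val)
          = -(2 ^ (m / 2)) * (-1 : ℤ) ^ (f y).val := by
  have h03 := isAntiSelfDual_bf_zero_three h8
  rintro f (rfl | rfl)
  · exact h03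
  · rw [funext bf_one_two_eq_bf_zero_three_add_one]
    exact h03.add_one

theorem stmt_14 (m : ℕ) (hm : 4 ≤ m) (h8 : m % 8 = 2) :
    ∀ f ∈ ({@bf 0 3 m, @bf 1 2 m} : Set ((Fin m → ZMod 2) → ZMod 2)),
      ∀ y : Fin m → ZMod 2,
        (∑ x : Fin m → ZMod 2, (-1 : ℤ) ^ (f x + dot x y).val)
          = -(2 ^ (m / 2)) * (-1 : ℤ) ^ (f y).val :=
  stmt_14_general m h8
end

section
/- Let m ≥ 4 with m ≡ 0 (mod 4), and let i1, i2 ∈ {0,1,2,3} with i1 - i2 ≡ 1 (mod 2). Then f_{i1,i2} is neither self-dual nor anti-self-dual: there exists y ∈ F_2^m with ∑_{x ∈ F_2^m} (-1)^{f_{i1,i2}(x) + x·y} ≠ 2^{m/2}(-1)^{f_{i1,i2}(y)}, and there exists y ∈ F_2^m with ∑_{x ∈ F_2^m} (-1)^{f_{i1,i2}(x) + x·y} ≠ -2^{m/2}(-1)^{f_{i1,i2}(y)}. -/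
open Finset

namespace SD17
abbrev G := GaussianInt
def ζ : G := ⟨0, 1⟩
def χ (a : ZMod 2) : ℤ := if a = 0 then 1 else -1
lemma χ_add (a b : ZMod 2) : χ (a + b) = χ a * χ b := by revert a b; decide
lemma pow_val (a : ZMod 2) : (-1 : ℤ) ^ a.val = χ a := by revert a; decide
lemma χ_sum {m : ℕ} (f : Fin m → ZMod 2) : χ (∑ i, f i) = ∏ i, χ (f i) := by
  classical
  induction (univ : Finset (Fin m)) using Finset.cons_induction with
  | empty => simp [χ]
  | cons a s ha ih => rw [Finset.sum_cons, Finset.prod_cons, χ_add, ih]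
lemma wt_eq_sum {m : ℕ} (x : Fin m → ZMod 2) : wt x = ∑ i, (x i).val := by
  rw [wt, Finset.card_filter]
  refine Finset.sum_congr rfl fun i _ => ?_
  have : ∀ a : ZMod 2, (if a = 1 then 1 else 0) = a.val := by decide
  exact this (x i)
lemma zeta_sq : ζ ^ 2 = -1 := by
  rw [pow_two]; ext <;> simp [ζ, Zsqrtd.re_mul, Zsqrtd.im_mul]
lemma zeta4 : ζ ^ 4 = 1 := by
  have : ζ ^ 4 = (ζ ^ 2) ^ 2 := by ring
  rw [this, zeta_sq]; ring
lemma zeta_pow_mod (w : ℕ) : ζ ^ w = ζ ^ (w % 4) := by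
  conv_lhs => rw [← Nat.div_add_mod w 4]
  rw [pow_add, pow_mul, zeta4, one_pow, one_mul]

lemma sum_zmod2 {M : Type*} [AddCommMonoid M] (h : ZMod 2 → M) :
    ∑ b : ZMod 2, h b = h 0 + h 1 := by
  rw [show (univ : Finset (ZMod 2)) = {0, 1} from rfl]
  simp

lemma W_eq {m : ℕ} (y : Fin m → ZMod 2) :
    (∑ x : Fin m → ZMod 2, ζ ^ wt x * ((χ (dot x y) : ℤ) : G))
      = ∏ i, (1 + ζ * ((χ (y i) : ℤ) : G)) := by
  classical
  have h1 : ∀ x : Fin m → ZMod 2, ζ ^ wt x * ((χ (dot x y) : ℤ) : G)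
      = ∏ i, (ζ ^ (x i).val * ((χ (x i * y i) : ℤ) : G)) := by
    intro x
    rw [wt_eq_sum, ← Finset.prod_pow_eq_pow_sum, dot, χ_sum]
    push_cast
    rw [Finset.prod_mul_distrib]
  rw [Finset.sum_congr rfl fun x _ => h1 x,
    ← Fintype.prod_sum (fun i b => ζ ^ (b : ZMod 2).val * ((χ (b * y i) : ℤ) : G))]
  refine Finset.prod_congr rfl fun i _ => ?_
  rw [sum_zmod2]
  simp [χ, ZMod.val_one]

def reHom : G →+ ℤ := { toFun := Zsqrtd.re, map_zero' := rfl, map_add' := fun _ _ => rfl }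
def imHom : G →+ ℤ := { toFun := Zsqrtd.im, map_zero' := rfl, map_add' := fun _ _ => rfl }

lemma S_eq {m : ℕ} (i₁ i₂ : ℕ) (σ τ : ℤ)
    (hη : ∀ w : ℕ, (if w % 4 = i₁ ∨ w % 4 = i₂ then (-1 : ℤ) else 1)
        = σ * ((ζ ^ w).re + τ * (ζ ^ w).im)) (y : Fin m → ZMod 2) :
    (∑ x : Fin m → ZMod 2, (-1 : ℤ) ^ (bf i₁ i₂ x + dot x y).val)
      = σ * (∑ x : Fin m → ZMod 2, ζ ^ wt x * ((χ (dot x y) : ℤ) : G)).re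
        + σ * τ * (∑ x : Fin m → ZMod 2, ζ ^ wt x * ((χ (dot x y) : ℤ) : G)).im := by
  have hre : (∑ x : Fin m → ZMod 2, ζ ^ wt x * ((χ (dot x y) : ℤ) : G)).re
      = ∑ x : Fin m → ZMod 2, (ζ ^ wt x).re * χ (dot x y) := by
    rw [show (∑ x : Fin m → ZMod 2, ζ ^ wt x * ((χ (dot x y) : ℤ) : G)).re
      = reHom (∑ x : Fin m → ZMod 2, ζ ^ wt x * ((χ (dot x y) : ℤ) : G)) from rfl,
      map_sum]
    refine Finset.sum_congr rfl fun x _ => ?_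
    show (ζ ^ wt x * ((χ (dot x y) : ℤ) : G)).re = _
    simp [Zsqrtd.re_mul]
  have him : (∑ x : Fin m → ZMod 2, ζ ^ wt x * ((χ (dot x y) : ℤ) : G)).im
      = ∑ x : Fin m → ZMod 2, (ζ ^ wt x).im * χ (dot x y) := by
    rw [show (∑ x : Fin m → ZMod 2, ζ ^ wt x * ((χ (dot x y) : ℤ) : G)).im
      = imHom (∑ x : Fin m → ZMod 2, ζ ^ wt x * ((χ (dot x y) : ℤ) : G)) from rfl,
      map_sum]
    refine Finset.sum_congr rfl fun x _ => ?_
    show (ζ ^ wt x * ((χ (dot x y) : ℤ) : G)).im = _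
    simp [Zsqrtd.im_mul]
  rw [hre, him, Finset.mul_sum, Finset.mul_sum, ← Finset.sum_add_distrib]
  refine Finset.sum_congr rfl fun x _ => ?_
  have h2 : (-1 : ℤ) ^ (bf i₁ i₂ x + dot x y).val = χ (bf i₁ i₂ x) * χ (dot x y) := by
    rw [pow_val, χ_add]
  have h3 : χ (bf i₁ i₂ x) = if wt x % 4 = i₁ ∨ wt x % 4 = i₂ then (-1 : ℤ) else 1 := by
    rw [bf]; split <;> simp [χ]
  rw [h2, h3, hη (wt x)]
  ring
end SD17

namespace SD17

lemma one_add_zeta_sq : (1 + ζ) ^ 2 = 2 * ζ := by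
  have : (1 + ζ) ^ 2 = 1 + 2 * ζ + ζ ^ 2 := by ring
  rw [this, zeta_sq]; ring

lemma one_add_zeta_four : (1 + ζ) ^ 4 = -4 := by
  have : (1 + ζ) ^ 4 = ((1 + ζ) ^ 2) ^ 2 := by ring
  rw [this, one_add_zeta_sq]
  have : (2 * ζ) ^ 2 = 4 * ζ ^ 2 := by ring
  rw [this, zeta_sq]; ring

lemma W_zero (m k : ℕ) (hm : m = 4 * k) :
    (∑ x : Fin m → ZMod 2, ζ ^ wt x * ((χ (dot x (fun _ => 0)) : ℤ) : G))
      = (((-4 : ℤ) ^ k : ℤ) : G) := by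
  rw [W_eq]
  have : ∀ i : Fin m, (1 + ζ * ((χ ((fun _ => (0 : ZMod 2)) i) : ℤ) : G)) = 1 + ζ := by
    intro i; simp [χ]
  rw [Finset.prod_congr rfl fun i _ => this i, Finset.prod_const, Finset.card_univ,
    Fintype.card_fin, hm]
  rw [show (1 + ζ) ^ (4 * k) = ((1 + ζ) ^ 4) ^ k by rw [← pow_mul], one_add_zeta_four]
  push_cast
  ring

lemma W_e0 (m k : ℕ) (hm : m = 4 * k) (hk : 1 ≤ k) (i0 : Fin m) :
    (∑ x : Fin m → ZMod 2,
        ζ ^ wt x * ((χ (dot x (fun j => if j = i0 then 1 else 0)) : ℤ) : G))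
      = (((-4 : ℤ) ^ (k - 1) * 4 : ℤ) : G) * ζ := by
  rw [W_eq, ← Finset.mul_prod_erase univ _ (Finset.mem_univ i0)]
  have h1 : (1 + ζ * ((χ (if i0 = i0 then 1 else 0) : ℤ) : G)) = 1 - ζ := by
    simp [χ]; ring
  have h2 : ∀ i ∈ univ.erase i0,
      (1 + ζ * ((χ (if i = i0 then 1 else 0) : ℤ) : G)) = 1 + ζ := by
    intro i hi
    rw [if_neg (Finset.ne_of_mem_erase hi)]
    simp [χ]
  rw [h1, Finset.prod_congr rfl h2, Finset.prod_const, Finset.card_erase_of_mem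
    (Finset.mem_univ i0), Finset.card_univ, Fintype.card_fin]
  have hm1 : m - 1 = 4 * (k - 1) + 3 := by omega
  rw [hm1, pow_add, show (1+ζ)^(4*(k-1)) = ((1+ζ)^4)^(k-1) by rw [← pow_mul], one_add_zeta_four]
  have hz1 : (1 - ζ) * (1 + ζ) = 2 := by
    have : (1 - ζ) * (1 + ζ) = 1 - ζ ^ 2 := by ring
    rw [this, zeta_sq]; ring
  have hz3 : (1 - ζ) * (1 + ζ) ^ 3 = 4 * ζ := by
    have h : (1 - ζ) * (1 + ζ) ^ 3 = ((1 - ζ) * (1 + ζ)) * (1 + ζ) ^ 2 := by ring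
    rw [h, hz1, one_add_zeta_sq]; ring
  calc (1 - ζ) * ((-4 : G) ^ (k - 1) * (1 + ζ) ^ 3)
      = (-4 : G) ^ (k - 1) * ((1 - ζ) * (1 + ζ) ^ 3) := by ring
    _ = (((-4 : ℤ) ^ (k - 1) * 4 : ℤ) : G) * ζ := by rw [hz3]; push_cast; ring

lemma wt_zero {m : ℕ} : wt (fun _ => (0 : ZMod 2) : Fin m → ZMod 2) = 0 := by
  simp [wt]

lemma wt_e0 {m : ℕ} (i0 : Fin m) :
    wt (fun j => if j = i0 then (1 : ZMod 2) else 0) = 1 := by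
  rw [wt]
  have : (univ.filter fun j => (if j = i0 then (1 : ZMod 2) else 0) = 1) = {i0} := by
    ext j
    by_cases h : j = i0 <;> simp [h]
  rw [this, Finset.card_singleton]

lemma key (m k : ℕ) (hm : m = 4 * k) (hk : 1 ≤ k) (i₁ i₂ : ℕ) (σ τ : ℤ)
    (hσ : σ = 1 ∨ σ = -1) (hτ : τ = 1 ∨ τ = -1)
    (hη : ∀ w : ℕ, (if w % 4 = i₁ ∨ w % 4 = i₂ then (-1 : ℤ) else 1)
        = σ * ((ζ ^ w).re + τ * (ζ ^ w).im)) :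
    (∃ y : Fin m → ZMod 2,
        (∑ x : Fin m → ZMod 2, (-1 : ℤ) ^ (bf i₁ i₂ x + dot x y).val)
          ≠ 2 ^ (m / 2) * (-1 : ℤ) ^ (bf i₁ i₂ y).val) ∧
      ∃ y : Fin m → ZMod 2,
        (∑ x : Fin m → ZMod 2, (-1 : ℤ) ^ (bf i₁ i₂ x + dot x y).val)
          ≠ -(2 ^ (m / 2)) * (-1 : ℤ) ^ (bf i₁ i₂ y).val := by
  have hm0 : 0 < m := by omega
  set i0 : Fin m := ⟨0, hm0⟩ with hi0
  set y0 : Fin m → ZMod 2 := fun _ => 0 with hy0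
  set y1 : Fin m → ZMod 2 := fun j => if j = i0 then 1 else 0 with hy1
  have hχbf : ∀ y : Fin m → ZMod 2,
      χ (bf i₁ i₂ y) = if wt y % 4 = i₁ ∨ wt y % 4 = i₂ then (-1 : ℤ) else 1 := by
    intro y; rw [bf]; split <;> simp [χ]
  have hbf0 : (-1 : ℤ) ^ (bf i₁ i₂ y0).val = σ := by
    rw [pow_val, hχbf, wt_zero, hη 0]
    simp [ζ]
  have hbf1 : (-1 : ℤ) ^ (bf i₁ i₂ y1).val = σ * τ := by
    rw [pow_val, hχbf, wt_e0, hη 1]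
    simp [ζ]
  have hS0 : (∑ x : Fin m → ZMod 2, (-1 : ℤ) ^ (bf i₁ i₂ x + dot x y0).val)
      = σ * ((-1 : ℤ) ^ k * 4 ^ k) := by
    rw [S_eq i₁ i₂ σ τ hη y0, hy0, W_zero m k hm]
    rw [Zsqrtd.re_intCast, Zsqrtd.im_intCast, neg_pow]
    ring
  have hcz : ∀ c : ℤ, ((c : G) * ζ) = ⟨0, c⟩ := by
    intro c
    ext <;> simp [ζ, Zsqrtd.re_mul, Zsqrtd.im_mul]
  have hval : (-4 : ℤ) ^ (k - 1) * 4 = -((-1 : ℤ) ^ k * 4 ^ k) := by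
    have hk' : k - 1 + 1 = k := by omega
    calc (-4 : ℤ) ^ (k - 1) * 4 = -(((-4 : ℤ) ^ (k - 1)) * (-4)) := by ring
      _ = -((-4 : ℤ) ^ (k - 1 + 1)) := by rw [pow_succ]
      _ = -((-4 : ℤ) ^ k) := by rw [hk']
      _ = -((-1 : ℤ) ^ k * 4 ^ k) := by rw [neg_pow]
  have hS1 : (∑ x : Fin m → ZMod 2, (-1 : ℤ) ^ (bf i₁ i₂ x + dot x y1).val)
      = -(σ * τ) * ((-1 : ℤ) ^ k * 4 ^ k) := by
    rw [S_eq i₁ i₂ σ τ hη y1, hy1, W_e0 m k hm hk i0, hcz]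
    show σ * 0 + σ * τ * ((-4 : ℤ) ^ (k - 1) * 4) = _
    rw [hval]; ring
  have hpow2 : (2 : ℤ) ^ (m / 2) = 4 ^ k := by
    rw [show m / 2 = 2 * k from by omega, pow_mul]; norm_num
  have hA : (0 : ℤ) < 4 ^ k := by positivity
  rcases Nat.even_or_odd k with he | he
  · have hek : (-1 : ℤ) ^ k = 1 := he.neg_one_pow
    refine ⟨⟨y1, ?_⟩, ⟨y0, ?_⟩⟩
    · rw [hS1, hbf1, hpow2, hek]
      rcases hσ with rfl | rfl <;> rcases hτ with rfl | rfl <;> intro h <;> nlinarith [hA]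
    · rw [hS0, hbf0, hpow2, hek]
      rcases hσ with rfl | rfl <;> rcases hτ with rfl | rfl <;> intro h <;> nlinarith [hA]
  · have hek : (-1 : ℤ) ^ k = -1 := he.neg_one_pow
    refine ⟨⟨y0, ?_⟩, ⟨y1, ?_⟩⟩
    · rw [hS0, hbf0, hpow2, hek]
      rcases hσ with rfl | rfl <;> rcases hτ with rfl | rfl <;> intro h <;> nlinarith [hA]
    · rw [hS1, hbf1, hpow2, hek]
      rcases hσ with rfl | rfl <;> rcases hτ with rfl | rfl <;> intro h <;> nlinarith [hA]

lemma zp2 : ζ ^ (2:ℕ) = ⟨-1, 0⟩ := by rw [zeta_sq]; ext <;> simp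
lemma zp3 : ζ ^ (3:ℕ) = ⟨0, -1⟩ := by
  rw [show (3:ℕ) = 2 + 1 from rfl, pow_add, zeta_sq, pow_one]
  ext <;> simp [ζ]

lemma mk_hη (i₁ i₂ : ℕ) (σ τ : ℤ)
    (h0 : (if (0:ℕ) % 4 = i₁ ∨ (0:ℕ) % 4 = i₂ then (-1:ℤ) else 1) = σ)
    (h1 : (if (1:ℕ) % 4 = i₁ ∨ (1:ℕ) % 4 = i₂ then (-1:ℤ) else 1) = σ * τ)
    (h2 : (if (2:ℕ) % 4 = i₁ ∨ (2:ℕ) % 4 = i₂ then (-1:ℤ) else 1) = -σ)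
    (h3 : (if (3:ℕ) % 4 = i₁ ∨ (3:ℕ) % 4 = i₂ then (-1:ℤ) else 1) = -(σ * τ)) :
    ∀ w : ℕ, (if w % 4 = i₁ ∨ w % 4 = i₂ then (-1 : ℤ) else 1)
        = σ * ((ζ ^ w).re + τ * (ζ ^ w).im) := by
  intro w
  rw [zeta_pow_mod]
  have h : w % 4 = 0 % 4 ∨ w % 4 = 1 % 4 ∨ w % 4 = 2 % 4 ∨ w % 4 = 3 % 4 := by omega
  rcases h with h | h | h | h <;> rw [h]
  · rw [h0, pow_zero]; show σ = σ * ((1:ℤ) + τ * 0); ring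
  · rw [h1, pow_one]; show σ * τ = σ * ((0:ℤ) + τ * 1); ring
  · rw [h2, zp2]; show -σ = σ * ((-1:ℤ) + τ * 0); ring
  · rw [h3, zp3]; show -(σ * τ) = σ * ((0:ℤ) + τ * -1); ring

lemma key' (m k : ℕ) (hm : m = 4 * k) (hk : 1 ≤ k) (i₁ i₂ : ℕ)
    (H2 : (if (2:ℕ) % 4 = i₁ ∨ (2:ℕ) % 4 = i₂ then (-1:ℤ) else 1)
        = -(if (0:ℕ) % 4 = i₁ ∨ (0:ℕ) % 4 = i₂ then (-1:ℤ) else 1))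
    (H3 : (if (3:ℕ) % 4 = i₁ ∨ (3:ℕ) % 4 = i₂ then (-1:ℤ) else 1)
        = -(if (1:ℕ) % 4 = i₁ ∨ (1:ℕ) % 4 = i₂ then (-1:ℤ) else 1)) :
    (∃ y : Fin m → ZMod 2,
        (∑ x : Fin m → ZMod 2, (-1 : ℤ) ^ (bf i₁ i₂ x + dot x y).val)
          ≠ 2 ^ (m / 2) * (-1 : ℤ) ^ (bf i₁ i₂ y).val) ∧
      ∃ y : Fin m → ZMod 2,
        (∑ x : Fin m → ZMod 2, (-1 : ℤ) ^ (bf i₁ i₂ x + dot x y).val)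
          ≠ -(2 ^ (m / 2)) * (-1 : ℤ) ^ (bf i₁ i₂ y).val := by
  set σ : ℤ := if (0:ℕ) % 4 = i₁ ∨ (0:ℕ) % 4 = i₂ then -1 else 1 with hσdef
  set τ0 : ℤ := if (1:ℕ) % 4 = i₁ ∨ (1:ℕ) % 4 = i₂ then -1 else 1 with hτdef
  have hσ : σ = 1 ∨ σ = -1 := by rw [hσdef]; split <;> simp
  have hτ0 : τ0 = 1 ∨ τ0 = -1 := by rw [hτdef]; split <;> simp
  have hσσ : σ * σ = 1 := by rcases hσ with h | h <;> rw [h] <;> norm_num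
  refine key m k hm hk i₁ i₂ σ (σ * τ0) hσ ?_ (mk_hη i₁ i₂ σ (σ * τ0) ?_ ?_ ?_ ?_)
  · rcases hσ with h | h <;> rcases hτ0 with h' | h' <;> rw [h, h'] <;> norm_num
  · exact hσdef.symm
  · rw [← mul_assoc, hσσ, one_mul]
  · exact H2
  · rw [← mul_assoc, hσσ, one_mul]; exact H3

end SD17

theorem stmt_17 (m : ℕ) (hm : 4 ≤ m) (h4 : m % 4 = 0) (i₁ i₂ : ℕ) (h₁ : i₁ < 4) (h₂ : i₂ < 4)
    (hodd : ((i₁ : ℤ) - i₂) % 2 = 1) :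
    (∃ y : Fin m → ZMod 2,
        (∑ x : Fin m → ZMod 2, (-1 : ℤ) ^ (bf i₁ i₂ x + dot x y).val)
          ≠ 2 ^ (m / 2) * (-1 : ℤ) ^ (bf i₁ i₂ y).val) ∧
      ∃ y : Fin m → ZMod 2,
        (∑ x : Fin m → ZMod 2, (-1 : ℤ) ^ (bf i₁ i₂ x + dot x y).val)
          ≠ -(2 ^ (m / 2)) * (-1 : ℤ) ^ (bf i₁ i₂ y).val := by
  obtain ⟨k, hk⟩ : ∃ k, m = 4 * k := ⟨m / 4, by omega⟩
  have hk1 : 1 ≤ k := by omega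
  interval_cases i₁ <;> interval_cases i₂ <;>
    first
      | omega
      | exact SD17.key' m k hk hk1 _ _ (by norm_num) (by norm_num)
end

section
/- Let m ≥ 4 be even and let i1, i2 ∈ {0,1,2,3} with i1 - i2 ≡ 1 (mod 2). Then f_{i1,i2} is not of Maiorana-McFarland type: there is no permutation φ of F_2^{m/2} and no function g : F_2^{m/2} → F_2 such that f_{i1,i2}(x, y) = x·φ(y) + g(y) (in F_2) for all x, y ∈ F_2^{m/2}, where (x, y) denotes the concatenation of x and y into a vector of F_2^m. -/
open Finset

lemma wt_append {n m : ℕ} (he : m = n + n) (x y : Fin n → ZMod 2) :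
    wt (Fin.append x y ∘ Fin.cast he) = wt x + wt y := by
  unfold wt
  rw [Finset.card_filter, Finset.card_filter, Finset.card_filter]
  have hc : ∀ i, (Fin.append x y ∘ Fin.cast he) i = Fin.append x y (finCongr he i) :=
    fun _ => rfl
  simp only [hc]
  rw [Equiv.sum_comp (finCongr he) (fun i => if Fin.append x y i = 1 then 1 else 0)]
  rw [Fin.sum_univ_add]
  simp only [Fin.append_left, Fin.append_right]

lemma wt_zero {n : ℕ} : wt (fun _ : Fin n => (0 : ZMod 2)) = 0 := by
  simp [wt]

lemma wt_single {n : ℕ} (i : Fin n) :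
    wt (fun t => if t = i then (1 : ZMod 2) else 0) = 1 := by
  unfold wt
  have : (univ.filter fun t => (if t = i then (1 : ZMod 2) else 0) = 1) = {i} := by
    ext t
    simp only [mem_filter, mem_univ, true_and, mem_singleton]
    split_ifs with h <;> simp [h]
  rw [this, card_singleton]

lemma wt_pair {n : ℕ} (i j : Fin n) (hij : i ≠ j) :
    wt (fun t => (if t = i then (1 : ZMod 2) else 0) + (if t = j then 1 else 0)) = 2 := by
  unfold wt
  have : (univ.filter fun t =>
      ((if t = i then (1 : ZMod 2) else 0) + (if t = j then 1 else 0)) = 1) = {i, j} := by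
    ext t
    simp only [mem_filter, mem_univ, true_and, mem_insert, mem_singleton]
    by_cases h1 : t = i <;> by_cases h2 : t = j <;> simp [h1, h2, hij, hij.symm]
  rw [this, card_pair hij]

lemma dot_zero {n : ℕ} (a : Fin n → ZMod 2) :
    dot (fun _ => 0) a = 0 := by simp [dot]

lemma dot_single {n : ℕ} (i : Fin n) (a : Fin n → ZMod 2) :
    dot (fun t => if t = i then (1 : ZMod 2) else 0) a = a i := by
  simp [dot, ite_mul, Finset.sum_ite_eq']

lemma dot_pair {n : ℕ} (i j : Fin n) (a : Fin n → ZMod 2) :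
    dot (fun t => (if t = i then (1 : ZMod 2) else 0) + (if t = j then 1 else 0)) a
      = a i + a j := by
  simp [dot, add_mul, ite_mul, Finset.sum_add_distrib, Finset.sum_ite_eq']

theorem stmt_18 (m : ℕ) (hm : 4 ≤ m) (hme : Even m) (he : m = m / 2 + m / 2)
    (i₁ i₂ : ℕ) (h₁ : i₁ < 4) (h₂ : i₂ < 4) (hodd : ((i₁ : ℤ) - i₂) % 2 = 1) :
    ¬ ∃ (φ : Equiv.Perm (Fin (m / 2) → ZMod 2)) (g : (Fin (m / 2) → ZMod 2) → ZMod 2),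
        ∀ x y : Fin (m / 2) → ZMod 2,
          bf i₁ i₂ (Fin.append x y ∘ Fin.cast he) = dot x (φ y) + g y := by
  rintro ⟨φ, g, hfg⟩
  have hn : 2 ≤ m / 2 := by omega
  set i0 : Fin (m / 2) := ⟨0, by omega⟩ with hi0
  set j0 : Fin (m / 2) := ⟨1, by omega⟩ with hj0
  have hij : i0 ≠ j0 := by simp [hi0, hj0, Fin.ext_iff]
  set y0 : Fin (m / 2) → ZMod 2 := fun _ => 0 with hy0
  have h0 := hfg (fun _ => 0) y0
  have h1 := hfg (fun t => if t = i0 then 1 else 0) y0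
  have h1' := hfg (fun t => if t = j0 then 1 else 0) y0
  have h2 := hfg (fun t => (if t = i0 then 1 else 0) + (if t = j0 then 1 else 0)) y0
  rw [show bf i₁ i₂ (Fin.append (fun _ => (0:ZMod 2)) y0 ∘ Fin.cast he)
      = if (0 % 4 = i₁ ∨ 0 % 4 = i₂) then 1 else 0 from by
        simp only [bf, wt_append, hy0, wt_zero],
    dot_zero] at h0
  rw [show bf i₁ i₂ (Fin.append (fun t => if t = i0 then (1:ZMod 2) else 0) y0 ∘ Fin.cast he)
      = if (1 % 4 = i₁ ∨ 1 % 4 = i₂) then 1 else 0 from by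
        simp only [bf, wt_append, wt_single, hy0, wt_zero],
    dot_single] at h1
  rw [show bf i₁ i₂ (Fin.append (fun t => if t = j0 then (1:ZMod 2) else 0) y0 ∘ Fin.cast he)
      = if (1 % 4 = i₁ ∨ 1 % 4 = i₂) then 1 else 0 from by
        simp only [bf, wt_append, wt_single, hy0, wt_zero],
    dot_single] at h1'
  rw [show bf i₁ i₂ (Fin.append
        (fun t => (if t = i0 then (1:ZMod 2) else 0) + (if t = j0 then 1 else 0)) y0
        ∘ Fin.cast he)
      = if (2 % 4 = i₁ ∨ 2 % 4 = i₂) then 1 else 0 from by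
        simp only [bf, wt_append, wt_pair i0 j0 hij, hy0, wt_zero],
    dot_pair] at h2
  -- from h1, h1' : a i0 = a j0
  have haa : φ y0 i0 = φ y0 j0 := by
    have := h1.symm.trans h1'
    exact add_right_cancel this
  -- hence h2 says b2 = g y0
  have hb2 : (if (2 % 4 = i₁ ∨ 2 % 4 = i₂) then (1:ZMod 2) else 0) = g y0 := by
    rw [h2, haa, ← two_mul, show (2 : ZMod 2) = 0 by decide, zero_mul, zero_add]
  have hb0 : (if (0 % 4 = i₁ ∨ 0 % 4 = i₂) then (1:ZMod 2) else 0) = g y0 := by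
    rw [h0, zero_add]
  -- but exactly one of the two conditions holds
  have hxor : (0 % 4 = i₁ ∨ 0 % 4 = i₂) ↔ ¬(2 % 4 = i₁ ∨ 2 % 4 = i₂) := by omega
  have := hb0.trans hb2.symm
  by_cases hc : (0 % 4 = i₁ ∨ 0 % 4 = i₂)
  · rw [if_pos hc, if_neg (hxor.mp hc ∘ fun h => h)] at this
    exact one_ne_zero this
  · rw [if_neg hc, if_pos (not_not.mp (fun h => hc (hxor.mpr h)))] at this
    exact one_ne_zero this.symm
end

section
/- Let m ≥ 2 be even. For x = (x_1, …, x_m) ∈ F_2^m define y = (y_1, …, y_m) by y_i = x_i + x_{i+1} for odd i, and y_i = x_i + x_{i+1} + … + x_m for even i (all sums in F_2). Then for every x ∈ F_2^m, y_1 y_2 + y_3 y_4 + … + y_{m-1} y_m = f_{2,3}(x) + x_2 + x_4 + … + x_m in F_2. Consequently f_{2,3} is affine equivalent to the Maiorana-McFarland bent function y_1 y_2 + y_3 y_4 + … + y_{m-1} y_m. -/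
open Finset

/-- The change of variables of Theorem 5: `y i = x i + x (i+1)` for `i` odd (1-based,
i.e. `(i : ℕ) % 2 = 0` with 0-based indexing) and `y i = x i + x (i+1) + ⋯ + x m` else.
(With `m` even, the `Fin`-addition `i + 1` never wraps around in the cases used.) -/
def yv {m : ℕ} [NeZero m] (x : Fin m → ZMod 2) (i : Fin m) : ZMod 2 :=
  if (i : ℕ) % 2 = 0 then x i + x (i + 1)
  else ∑ j ∈ Finset.univ.filter (fun j => i ≤ j), x j

/-- Affine equivalence of Boolean functions on `F₂^m`. -/
def AffEquiv {m : ℕ} (f g : (Fin m → ZMod 2) → ZMod 2) : Prop :=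
  ∃ A : (Fin m → ZMod 2) ≃ₗ[ZMod 2] (Fin m → ZMod 2), ∃ b c : Fin m → ZMod 2, ∃ ε : ZMod 2,
    ∀ x, g x = f (A x + b) + dot c x + ε

/-! Indices are 0-based, so the pairs are `(i, i + 1)` with `i` even. Put `T i = ∑_{k > i} x k`.
Then `y i = x i + x (i + 1)` and `y (i + 1) = T i = x (i + 1) + T (i + 1)`, so, as `a² = a` in
`F₂`, `y i y (i + 1) = x i T i + x (i + 1) T (i + 1) + x (i + 1)`. Summing over the pairs gives
`∑_j x j T j + ∑_{j odd} x j`, and `∑_j x j T j = ∑_{j < k} x j x k` counts the pairs inside the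
support of `x`, i.e. it is `C(wt x, 2) mod 2`, which is `1` exactly when `wt x ≡ 2, 3 (mod 4)`.

The change of variables `x ↦ y` is linear and upper unitriangular (`y i` involves only the `x j`
with `j ≥ i`, and `x i` with coefficient `1`), hence invertible. Composing the identity with its
inverse gives the affine equivalence, the linear term `∑_{j odd} x j` becoming some `dot c z`. -/

theorem Nat.choose_two_mod_two (n : ℕ) :
    n.choose 2 % 2 = if n % 4 = 2 ∨ n % 4 = 3 then 1 else 0 := by
  induction n with
  | zero => rfl
  | succ n ih =>
    have h : (n + 1).choose 2 = n + n.choose 2 := by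
      rw [Nat.choose_succ_succ', Nat.choose_one_right]
    split_ifs at ih ⊢ <;> omega

theorem bf_two_three_eq_choose {m : ℕ} (x : Fin m → ZMod 2) :
    bf 2 3 x = ((wt x).choose 2 : ZMod 2) := by
  rw [bf, ← ZMod.natCast_mod, Nat.choose_two_mod_two]
  split_ifs <;> simp

theorem ZMod.eq_zero_or_eq_one_of_two (a : ZMod 2) : a = 0 ∨ a = 1 := by
  revert a
  decide

theorem ZMod.sum_two_eq_card_filter_eq_one {ι : Type*} (s : Finset ι) (x : ι → ZMod 2) :
    ∑ i ∈ s, x i = #{i ∈ s | x i = 1} := by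
  rw [natCast_card_filter]
  refine sum_congr rfl fun i _ => ?_
  rcases ZMod.eq_zero_or_eq_one_of_two (x i) with h | h <;> simp [h]

theorem ZMod.sum_mul_sum_gt_eq_choose {ι : Type*} [LinearOrder ι] (s : Finset ι)
    (x : ι → ZMod 2) :
    ∑ j ∈ s, x j * ∑ k ∈ s with j < k, x k =
      ((#{j ∈ s | x j = 1}).choose 2 : ZMod 2) := by
  induction s using Finset.induction_on_max with
  | empty => simp
  | insert a s ha ih =>
    have ha' : a ∉ s := fun h => lt_irrefl a (ha a h)
    have hsucc : ∀ j ∈ s, x j * ∑ k ∈ insert a s with j < k, x k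
        = x j * ∑ k ∈ s with j < k, x k + x j * x a := by
      intro j hj
      rw [filter_insert, if_pos (ha j hj), sum_insert (by simp [ha'])]
      ring
    have hnone : {k ∈ insert a s | a < k} = ∅ :=
      filter_eq_empty_iff.2 fun k hk => by
        rcases mem_insert.1 hk with rfl | hk
        exacts [lt_irrefl k, (ha k hk).not_gt]
    rw [sum_insert ha', hnone, sum_empty, mul_zero, zero_add, sum_congr rfl hsucc,
      sum_add_distrib, ih, ← sum_mul, sum_two_eq_card_filter_eq_one, filter_insert]
    split_ifs with hxa
    · rw [card_insert_of_notMem (by simp [ha']), Nat.choose_succ_succ', Nat.choose_one_right,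
        hxa]
      push_cast
      ring
    · rw [(ZMod.eq_zero_or_eq_one_of_two (x a)).resolve_right hxa]
      ring

theorem sum_even_add_sum_odd {M : Type*} {m : ℕ} [AddCommMonoid M] (g : Fin m → M) :
    ∑ i ∈ univ.filter (fun i : Fin m => (i : ℕ) % 2 = 0), g i
      + ∑ j ∈ univ.filter (fun j : Fin m => (j : ℕ) % 2 = 1), g j = ∑ i, g i := by
  simp only [← Nat.mod_two_ne_zero]
  exact sum_filter_add_sum_filter_not _ _ _

section ChangeOfVariables

variable {m : ℕ} [NeZero m]

theorem Fin.val_add_one_of_even (hm : Even m) {i : Fin m} (hi : (i : ℕ) % 2 = 0) :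
    ((i + 1 : Fin m) : ℕ) = i + 1 :=
  Fin.val_add_one_of_lt' (by obtain ⟨k, rfl⟩ := hm; have := i.isLt; omega)

theorem sum_even_add_one_eq_sum_odd {M : Type*} [AddCommMonoid M] (hm : Even m)
    (g : Fin m → M) :
    ∑ i ∈ univ.filter (fun i : Fin m => (i : ℕ) % 2 = 0), g (i + 1)
      = ∑ j ∈ univ.filter (fun j : Fin m => (j : ℕ) % 2 = 1), g j := by
  refine (sum_nbij (· + 1) (fun i hi => ?_) (fun i _ j _ h => add_right_cancel h)
    (fun j hj => ?_) fun _ _ => rfl)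
  · simp only [mem_filter, mem_univ, true_and] at hi ⊢
    rw [Fin.val_add_one_of_even hm hi]
    omega
  · simp only [mem_coe, mem_filter, mem_univ, true_and] at hj
    have hj1 : (j : ℕ) - 1 < m := by omega
    have hj2 : ((j : ℕ) - 1) % 2 = 0 := by omega
    refine ⟨⟨j - 1, hj1⟩, by simpa using hj2, Fin.ext ?_⟩
    rw [Fin.val_add_one_of_even hm hj2, Fin.val_mk]
    omega

theorem yv_mul_yv_add_one (hm : Even m) (x : Fin m → ZMod 2) {i : Fin m}
    (hi : (i : ℕ) % 2 = 0) :
    yv x i * yv x (i + 1) = x i * ∑ k with i < k, x k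
      + x (i + 1) * ∑ k with i + 1 < k, x k + x (i + 1) := by
  have hv := Fin.val_add_one_of_even hm hi
  have hyv : yv x (i + 1) = ∑ k with i < k, x k := by
    rw [yv, if_neg (by omega)]
    congr 1
    ext k
    simp only [mem_filter, mem_univ, true_and, Fin.le_def, Fin.lt_def, hv]
    omega
  have hsplit : ∑ k with i < k, x k = x (i + 1) + ∑ k with i + 1 < k, x k := by
    rw [← sum_insert (by simp)]
    congr 1
    ext k
    simp only [mem_insert, mem_filter, mem_univ, true_and, Fin.lt_def, Fin.ext_iff, hv]
    omega
  have hsq : x (i + 1) * x (i + 1) = x (i + 1) := by rw [← sq, ZMod.pow_card]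
  rw [hyv, yv, if_pos hi, add_mul, hsplit, mul_add (x (i + 1)), hsq, ← hsplit]
  ring

theorem sum_yv_mul_yv_add_one (hm : Even m) (x : Fin m → ZMod 2) :
    ∑ i ∈ univ.filter (fun i : Fin m => (i : ℕ) % 2 = 0), yv x i * yv x (i + 1)
      = bf 2 3 x + ∑ j ∈ univ.filter (fun j : Fin m => (j : ℕ) % 2 = 1), x j := by
  set g : Fin m → ZMod 2 := fun j => x j * ∑ k with j < k, x k
  calc ∑ i ∈ univ.filter (fun i : Fin m => (i : ℕ) % 2 = 0), yv x i * yv x (i + 1)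
      = ∑ i ∈ univ.filter (fun i : Fin m => (i : ℕ) % 2 = 0), (g i + g (i + 1) + x (i + 1)) :=
        sum_congr rfl fun i hi => yv_mul_yv_add_one hm x (mem_filter.1 hi).2
    _ = ∑ j, g j + ∑ j ∈ univ.filter (fun j : Fin m => (j : ℕ) % 2 = 1), x j := by
        rw [sum_add_distrib, sum_add_distrib, sum_even_add_one_eq_sum_odd hm,
          sum_even_add_one_eq_sum_odd hm, sum_even_add_sum_odd]
    _ = bf 2 3 x + ∑ j ∈ univ.filter (fun j : Fin m => (j : ℕ) % 2 = 1), x j := by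
        rw [ZMod.sum_mul_sum_gt_eq_choose, bf_two_three_eq_choose]
        rfl

variable (m) in
def yvLinearMap : (Fin m → ZMod 2) →ₗ[ZMod 2] (Fin m → ZMod 2) where
  toFun := yv
  map_add' x x' := by
    ext i
    simp only [yv, Pi.add_apply, sum_add_distrib]
    split_ifs <;> ring
  map_smul' c x := by
    ext i
    simp only [yv, Pi.smul_apply, smul_eq_mul, RingHom.id_apply]
    split_ifs
    · ring
    · rw [mul_sum]

theorem yvLinearMap_apply (x : Fin m → ZMod 2) : yvLinearMap m x = yv x := rfl

theorem isUpperTriangular_toMatrix'_yvLinearMap (hm : Even m) :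
    (LinearMap.toMatrix' (yvLinearMap m)).IsUpperTriangular := by
  intro i j hji
  rw [LinearMap.toMatrix'_apply, yvLinearMap_apply, yv]
  split_ifs with hi
  · have hv := Fin.val_add_one_of_even hm hi
    have hji : (j : ℕ) < i := hji
    rw [Pi.single_eq_of_ne (by rw [ne_eq, Fin.ext_iff]; omega),
      Pi.single_eq_of_ne (by rw [ne_eq, Fin.ext_iff, hv]; omega), add_zero]
  · refine sum_eq_zero fun k hk => Pi.single_eq_of_ne (fun hkj => ?_) _
    exact (mem_filter.1 hk).2.not_gt (hkj ▸ hji)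

theorem toMatrix'_yvLinearMap_diag (hm : Even m) (i : Fin m) :
    LinearMap.toMatrix' (yvLinearMap m) i i = 1 := by
  rw [LinearMap.toMatrix'_apply, yvLinearMap_apply, yv]
  split_ifs with hi
  · have hv := Fin.val_add_one_of_even hm hi
    rw [Pi.single_eq_same, Pi.single_eq_of_ne (by rw [ne_eq, Fin.ext_iff, hv]; omega), add_zero]
  · rw [sum_pi_single' i 1, if_pos (by simp)]

theorem det_yvLinearMap (hm : Even m) : LinearMap.det (yvLinearMap m) = 1 := by
  rw [← LinearMap.det_toMatrix', Matrix.det_of_isUpperTriangular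
    (isUpperTriangular_toMatrix'_yvLinearMap hm)]
  exact prod_eq_one fun i _ => toMatrix'_yvLinearMap_diag hm i

noncomputable def yvEquiv (hm : Even m) : (Fin m → ZMod 2) ≃ₗ[ZMod 2] (Fin m → ZMod 2) :=
  (yvLinearMap m).equivOfDetNeZero (by rw [det_yvLinearMap hm]; exact one_ne_zero)

theorem yv_yvEquiv_symm (hm : Even m) (z : Fin m → ZMod 2) : yv ((yvEquiv hm).symm z) = z :=
  (yvEquiv hm).apply_symm_apply z

end ChangeOfVariables

theorem exists_dot_eq {m : ℕ} (f : (Fin m → ZMod 2) →ₗ[ZMod 2] ZMod 2) :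
    ∃ c, ∀ x, f x = dot c x :=
  ⟨fun i => f fun j => if i = j then 1 else 0, fun x => by
    rw [LinearMap.pi_apply_eq_sum_univ f x, dot]
    simp only [smul_eq_mul, mul_comm]⟩

theorem stmt_19_general (m : ℕ) [NeZero m] (hme : Even m) :
    (∀ x : Fin m → ZMod 2,
        (∑ i ∈ Finset.univ.filter (fun i : Fin m => (i : ℕ) % 2 = 0), yv x i * yv x (i + 1))
          = bf 2 3 x + ∑ j ∈ Finset.univ.filter (fun j : Fin m => (j : ℕ) % 2 = 1), x j) ∧
      AffEquiv (@bf 2 3 m)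
        (fun z : Fin m → ZMod 2 =>
          ∑ i ∈ Finset.univ.filter (fun i : Fin m => (i : ℕ) % 2 = 0), z i * z (i + 1)) := by
  refine ⟨sum_yv_mul_yv_add_one hme, ?_⟩
  let oddSum : (Fin m → ZMod 2) →ₗ[ZMod 2] ZMod 2 :=
    ∑ j ∈ univ.filter (fun j : Fin m => (j : ℕ) % 2 = 1), LinearMap.proj j
  obtain ⟨c, hc⟩ := exists_dot_eq (oddSum ∘ₗ (yvEquiv hme).symm.toLinearMap)
  refine ⟨(yvEquiv hme).symm, 0, c, 0, fun z => ?_⟩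
  have h := sum_yv_mul_yv_add_one hme ((yvEquiv hme).symm z)
  rw [yv_yvEquiv_symm] at h
  dsimp only
  rw [h, add_zero, add_zero, ← hc]
  simp [oddSum]

theorem stmt_19 (m : ℕ) [NeZero m] (hm : 2 ≤ m) (hme : Even m) :
    (∀ x : Fin m → ZMod 2,
        (∑ i ∈ Finset.univ.filter (fun i : Fin m => (i : ℕ) % 2 = 0), yv x i * yv x (i + 1))
          = bf 2 3 x + ∑ j ∈ Finset.univ.filter (fun j : Fin m => (j : ℕ) % 2 = 1), x j) ∧
      AffEquiv (@bf 2 3 m)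
        (fun z : Fin m → ZMod 2 =>
          ∑ i ∈ Finset.univ.filter (fun i : Fin m => (i : ℕ) % 2 = 0), z i * z (i + 1)) :=
  stmt_19_general m hme
end
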